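/- arXiv:cond-mat/0203558 — 10 statements merged into one kernel-verified Lean document; each statement's English description precedes it below -/
import Mathlib

section
/- Value-at-risk is comonotonic additive: for every α ∈ (0,1], every real random variable Z on a probability space (Ω, ℱ, P), and all non-decreasing functions f, g : ℝ → ℝ, one has VaR_α(f∘Z + g∘Z) = VaR_α(f∘Z) + VaR_α(g∘Z). -/
open MeasureTheory Set

/-- The `α`-quantile of a real random variable `X`, as an extended real number,
`q_α(X) = inf {x ∈ ℝ : P[X ≤ x] ≥ α}` with the convention `inf ∅ = ∞`. -/
noncomputable def quantileE {Ω : Type*} [MeasurableSpace Ω] (μ : Measure Ω)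
    (X : Ω → ℝ) (α : ℝ) : EReal :=
  sInf ((fun x : ℝ => (x : EReal)) '' {x : ℝ | ENNReal.ofReal α ≤ μ {ω | X ω ≤ x}})

/-- Value-at-risk at level `α`: `VaR_α(X) = q_α(-X)`. -/
noncomputable def VaRE {Ω : Type*} [MeasurableSpace Ω] (μ : Measure Ω)
    (X : Ω → ℝ) (α : ℝ) : EReal :=
  quantileE μ (fun ω => - X ω) α

/-! The random variables `f ∘ Z` and `g ∘ Z` are comonotone, so their upper level sets
`{a ≤ f ∘ Z}` and `{b ≤ g ∘ Z}` are nested. Let `S X` be the set of capitals `x` with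
`P[X + x ≥ 0] ≥ α`, so that `VaR_α X = inf S X`. Since `{-(p + q) ≤ f ∘ Z + g ∘ Z}` lies between
the intersection and the union of the nested events `{-p ≤ f ∘ Z}` and `{-q ≤ g ∘ Z}`, we get
`p + q ∈ S (f ∘ Z + g ∘ Z)` whenever `p ∈ S (f ∘ Z)` and `q ∈ S (g ∘ Z)`, and only if one of
these holds. For sets of reals bounded below, these two properties force
`inf S (f ∘ Z + g ∘ Z) = inf S (f ∘ Z) + inf S (g ∘ Z)`. -/

open Filter Topology

lemma Monovary.setOf_le_subset_or_subset {ι α β : Type*} [Preorder α] [LinearOrder β]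
    {X : ι → α} {Y : ι → β} (h : Monovary X Y) (a : α) (b : β) :
    {i | a ≤ X i} ⊆ {i | b ≤ Y i} ∨ {i | b ≤ Y i} ⊆ {i | a ≤ X i} := by
  refine or_iff_not_imp_left.2 fun hXY j hj => ?_
  obtain ⟨i, hiX, hiY⟩ := not_subset.1 hXY
  exact hiX.trans (h ((not_le.1 hiY).trans_le hj))

lemma EReal.sInf_image_coe {A : Set ℝ} (hne : A.Nonempty) (hA : BddBelow A) :
    sInf ((↑) '' A : Set EReal) = (sInf A : ℝ) :=
  (Monotone.map_csInf_of_continuousAt continuous_coe_real_ereal.continuousAt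
    (fun _ _ => EReal.coe_le_coe) hne hA).symm

lemma EReal.sInf_image_coe_ne_bot {A : Set ℝ} (hA : BddBelow A) :
    sInf ((↑) '' A : Set EReal) ≠ ⊥ := by
  obtain ⟨m, hm⟩ := hA
  refine ne_bot_of_le_ne_bot (EReal.coe_ne_bot m) (le_sInf ?_)
  rintro _ ⟨a, ha, rfl⟩
  exact EReal.coe_le_coe_iff.2 (hm ha)

section Splitting

variable {A B C : Set ℝ}

lemma Set.Nonempty.of_add_mem_or_mem (hB : BddBelow B)
    (hsplit : ∀ p q, p + q ∈ C → p ∈ A ∨ q ∈ B) (hC : C.Nonempty) : A.Nonempty := by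
  obtain ⟨x, hx⟩ := hC
  obtain ⟨m, hm⟩ := hB
  have hxA : x - m + 1 ∈ A ∨ m - 1 ∈ B := hsplit _ _ (by convert hx using 1; ring)
  exact ⟨_, hxA.resolve_right fun h => by linarith [hm h]⟩

lemma Real.sInf_eq_add_of_add_mem_of_mem_or_mem (hAne : A.Nonempty) (hA : BddBelow A)
    (hBne : B.Nonempty) (hB : BddBelow B) (hC : BddBelow C)
    (hadd : ∀ p ∈ A, ∀ q ∈ B, p + q ∈ C) (hsplit : ∀ p q, p + q ∈ C → p ∈ A ∨ q ∈ B) :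
    sInf C = sInf A + sInf B := by
  have hCne : C.Nonempty := ⟨_, hadd _ hAne.some_mem _ hBne.some_mem⟩
  apply le_antisymm
  · have hlow : ∀ q ∈ B, sInf C - sInf A ≤ q := fun q hq => by
      have := le_csInf hAne fun p hp => (show sInf C - q ≤ p by
        linarith [csInf_le hC (hadd p hp q hq)])
      linarith
    linarith [le_csInf hBne hlow]
  · refine le_csInf hCne fun x hx => ?_
    have hA_le : sInf A ≤ x - sInf B := forall_lt_imp_le_iff_le_of_dense.mp fun p hp => by
      have hq : x - p ∈ B :=
        (hsplit p (x - p) (by rwa [add_sub_cancel])).resolve_left (notMem_of_lt_csInf hp hA)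
      linarith [csInf_le hB hq]
    linarith

lemma EReal.sInf_image_coe_eq_add (hA : BddBelow A) (hB : BddBelow B) (hC : BddBelow C)
    (hadd : ∀ p ∈ A, ∀ q ∈ B, p + q ∈ C) (hsplit : ∀ p q, p + q ∈ C → p ∈ A ∨ q ∈ B) :
    sInf ((↑) '' C : Set EReal) = sInf ((↑) '' A) + sInf ((↑) '' B) := by
  rcases C.eq_empty_or_nonempty with rfl | hCne
  · rcases A.eq_empty_or_nonempty with rfl | hAne
    · simp only [image_empty, sInf_empty]
      exact (EReal.top_add_of_ne_bot (EReal.sInf_image_coe_ne_bot hB)).symm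
    rcases B.eq_empty_or_nonempty with rfl | hBne
    · simp only [image_empty, sInf_empty]
      exact (EReal.add_top_of_ne_bot (EReal.sInf_image_coe_ne_bot hA)).symm
    exact absurd (hadd _ hAne.some_mem _ hBne.some_mem) (notMem_empty _)
  have hAne : A.Nonempty := hCne.of_add_mem_or_mem hB hsplit
  have hBne : B.Nonempty :=
    hCne.of_add_mem_or_mem hA fun q p h => (hsplit p q (by rwa [add_comm])).symm
  rw [EReal.sInf_image_coe hAne hA, EReal.sInf_image_coe hBne hB, EReal.sInf_image_coe hCne hC,
    ← EReal.coe_add, Real.sInf_eq_add_of_add_mem_of_mem_or_mem hAne hA hBne hB hC hadd hsplit]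

end Splitting

section AcceptanceSet

variable {Ω : Type*} [MeasurableSpace Ω] {μ : Measure Ω} {X Y : Ω → ℝ} {α p q : ℝ}

def varAcceptanceSet (μ : Measure Ω) (X : Ω → ℝ) (α : ℝ) : Set ℝ :=
  {x | ENNReal.ofReal α ≤ μ {ω | -x ≤ X ω}}

lemma VaRE_eq_sInf_image_coe (μ : Measure Ω) (X : Ω → ℝ) (α : ℝ) :
    VaRE μ X α = sInf ((↑) '' varAcceptanceSet μ X α) := by
  simp only [VaRE, quantileE, varAcceptanceSet, neg_le]

lemma bddBelow_varAcceptanceSet [IsFiniteMeasure μ] (hα : 0 < α) (hX : AEMeasurable X μ) :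
    BddBelow (varAcceptanceSet μ X α) := by
  have htail : Tendsto (fun n : ℝ => μ {ω | n ≤ X ω}) atTop (𝓝 0) := by
    have hempty : ⋂ n : ℝ, {ω | n ≤ X ω} = ∅ :=
      eq_empty_of_forall_notMem fun ω hω => (lt_add_one (X ω)).not_ge (mem_iInter.1 hω (X ω + 1))
    have h := tendsto_measure_iInter_atTop (μ := μ) (s := fun n : ℝ => {ω | n ≤ X ω})
      (fun _ => hX.nullMeasurable measurableSet_Ici) (fun _ _ hnm _ hω => hnm.trans hω)
      ⟨0, measure_ne_top μ _⟩
    rwa [hempty, measure_empty] at h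
  obtain ⟨n, hn⟩ := (htail.eventually_lt_const (ENNReal.ofReal_pos.2 hα)).exists
  refine ⟨-n, fun x hx => ?_⟩
  by_contra! hlt
  have hsub : {ω | -x ≤ X ω} ⊆ {ω | n ≤ X ω} := fun ω (hω : -x ≤ X ω) =>
    (show n ≤ X ω by linarith)
  exact (hx.trans (measure_mono hsub)).not_gt hn

lemma Monovary.add_mem_varAcceptanceSet (h : Monovary X Y) (hp : p ∈ varAcceptanceSet μ X α)
    (hq : q ∈ varAcceptanceSet μ Y α) : p + q ∈ varAcceptanceSet μ (X + Y) α := by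
  have hsub : {ω | -p ≤ X ω} ∩ {ω | -q ≤ Y ω} ⊆ {ω | -(p + q) ≤ (X + Y) ω} :=
    fun ω ⟨(hpω : -p ≤ X ω), (hqω : -q ≤ Y ω)⟩ => (show -(p + q) ≤ X ω + Y ω by linarith)
  refine le_trans ?_ (measure_mono hsub)
  rcases h.setOf_le_subset_or_subset (-p) (-q) with hXY | hYX
  · rwa [inter_eq_left.2 hXY]
  · rwa [inter_eq_right.2 hYX]

lemma Monovary.mem_or_mem_of_add_mem_varAcceptanceSet (h : Monovary X Y)
    (hpq : p + q ∈ varAcceptanceSet μ (X + Y) α) :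
    p ∈ varAcceptanceSet μ X α ∨ q ∈ varAcceptanceSet μ Y α := by
  have hsub : {ω | -(p + q) ≤ (X + Y) ω} ⊆ {ω | -p ≤ X ω} ∪ {ω | -q ≤ Y ω} := by
    intro ω (hω : -(p + q) ≤ X ω + Y ω)
    by_cases hpω : -p ≤ X ω
    · exact .inl hpω
    · exact .inr (show -q ≤ Y ω by linarith [not_le.1 hpω])
  rcases h.setOf_le_subset_or_subset (-p) (-q) with hXY | hYX
  · rw [union_eq_right.2 hXY] at hsub
    exact .inr (hpq.trans (measure_mono hsub))
  · rw [union_eq_left.2 hYX] at hsub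
    exact .inl (hpq.trans (measure_mono hsub))

end AcceptanceSet

/-- Value-at-risk is comonotonic additive. -/
theorem var_comonotonic_additive {Ω : Type*} [MeasurableSpace Ω] (μ : Measure Ω)
    [IsProbabilityMeasure μ] (α : ℝ) (hα : α ∈ Set.Ioc (0 : ℝ) 1)
    (Z : Ω → ℝ) (hZ : Measurable Z) (f g : ℝ → ℝ) (hf : Monotone f) (hg : Monotone g) :
    VaRE μ (fun ω => f (Z ω) + g (Z ω)) α
      = VaRE μ (fun ω => f (Z ω)) α + VaRE μ (fun ω => g (Z ω)) α := by
  have hfg : Monovary (f ∘ Z) (g ∘ Z) := (hf.monovary hg).comp_right Z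
  have hfZ : AEMeasurable (f ∘ Z) μ := (hf.measurable.comp hZ).aemeasurable
  have hgZ : AEMeasurable (g ∘ Z) μ := (hg.measurable.comp hZ).aemeasurable
  rw [VaRE_eq_sInf_image_coe, VaRE_eq_sInf_image_coe, VaRE_eq_sInf_image_coe]
  exact EReal.sInf_image_coe_eq_add (bddBelow_varAcceptanceSet hα.1 hfZ)
    (bddBelow_varAcceptanceSet hα.1 hgZ) (bddBelow_varAcceptanceSet hα.1 (hfZ.add hgZ))
    (fun _ hp _ hq => hfg.add_mem_varAcceptanceSet hp hq)
    (fun _ _ => hfg.mem_or_mem_of_add_mem_varAcceptanceSet)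
end

section
/- Let X₁ and X₂ be independent real random variables, each with distribution function P[Xᵢ ≤ x] = (2−x)^{−1} for x < 1 (and = 1 for x ≥ 1). Then for every x < 2, P[X₁ + X₂ ≤ x] = 2/(4−x) + 2·log(3−x)/(4−x)². -/
/-!
By independence, `P[X₁ + X₂ ≤ x] = ∫ F(x - a) dν(a)`, where `F` is the distribution function and
`ν` the common law, which `F` identifies as the measure with density `(2 - t)⁻²` on `t < 1`.
For `a ≤ x - 1` the integrand is `1`, contributing `F(x - 1) = (3 - x)⁻¹`; on `(x - 1, 1)` it is
`(2 - x + a)⁻¹`, and `(2 - a)⁻²(2 - x + a)⁻¹` is integrated by partial fractions.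
-/

open MeasureTheory Set Filter Topology

theorem lintegral_Iic_of_hasDerivAt_of_nonneg {g g' : ℝ → ℝ} {a l : ℝ}
    (hderiv : ∀ x ∈ Iic a, HasDerivAt g (g' x) x) (g'pos : ∀ x ∈ Iic a, 0 ≤ g' x)
    (hg : Tendsto g atBot (𝓝 l)) :
    ∫⁻ x in Iic a, ENNReal.ofReal (g' x) = ENNReal.ofReal (g a - l) := by
  have hneg : IntegrableOn (fun x => g' (-x)) (Ioi (-a)) := by
    refine integrableOn_Ioi_deriv_of_nonneg' (g := fun x => -g (-x)) (l := -l)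
      (fun x hx => ?_) (fun x hx => g'pos _ (neg_le.1 hx.out.le))
      (hg.comp tendsto_neg_atTop_atBot).neg
    have h := (hderiv (-x) (neg_le.1 hx.out)).comp x (hasDerivAt_neg' (x := x))
    exact h.neg.congr_deriv (by ring)
  have hint : IntegrableOn g' (Iic a) := by
    simpa using ((integrableOn_Ici_iff_integrableOn_Ioi (by finiteness)).2 hneg).comp_neg_Iic
  rw [← ofReal_integral_eq_lintegral_ofReal hint ((ae_restrict_iff' measurableSet_Iic).2
    (Eventually.of_forall g'pos)), integral_Iic_of_hasDerivAt_of_tendsto' hderiv hint hg]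

theorem ProbabilityTheory.IndepFun.measure_add_le_eq_lintegral {Ω : Type*} [MeasurableSpace Ω]
    {μ : Measure Ω} [IsFiniteMeasure μ] {X Y : Ω → ℝ} (hXY : IndepFun X Y μ)
    (hX : Measurable X) (hY : Measurable Y) (x : ℝ) :
    μ {ω | X ω + Y ω ≤ x} = ∫⁻ a, μ.map Y (Iic (x - a)) ∂μ.map X := by
  have hs : MeasurableSet {p : ℝ × ℝ | p.1 + p.2 ≤ x} :=
    measurableSet_le (measurable_fst.add measurable_snd) measurable_const
  have hlaw := (indepFun_iff_map_prod_eq_prod_map_map hX.aemeasurable hY.aemeasurable).1 hXY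
  have hsec (a : ℝ) : Prod.mk a ⁻¹' {p : ℝ × ℝ | p.1 + p.2 ≤ x} = Iic (x - a) := by
    ext b; simp [le_sub_iff_add_le']
  simp_rw [← hsec]
  rw [← Measure.prod_apply hs, ← hlaw, Measure.map_apply (hX.prodMk hY) hs]
  rfl

lemma hasDerivAt_inv_two_sub {t : ℝ} (ht : t ≠ 2) :
    HasDerivAt (fun s : ℝ => (2 - s)⁻¹) ((2 - t) ^ 2)⁻¹ t := by
  refine (((hasDerivAt_id t).const_sub 2).inv (sub_ne_zero.2 ht.symm)).congr_deriv ?_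
  simp

lemma tendsto_inv_two_sub_atBot : Tendsto (fun t : ℝ => (2 - t)⁻¹) atBot (𝓝 0) :=
  (tendsto_atTop_add_const_left atBot 2 tendsto_neg_atBot_atTop).inv_tendsto_atTop

lemma lintegral_Iic_inv_two_sub_sq {b : ℝ} (hb : b < 2) :
    ∫⁻ t in Iic b, ENNReal.ofReal ((2 - t) ^ 2)⁻¹ = ENNReal.ofReal (2 - b)⁻¹ := by
  rw [lintegral_Iic_of_hasDerivAt_of_nonneg
    (fun t ht => hasDerivAt_inv_two_sub (ht.out.trans_lt hb).ne)
    (fun t _ => by positivity) tendsto_inv_two_sub_atBot, sub_zero]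

noncomputable def paretoMeasure : Measure ℝ :=
  (volume.restrict (Iio 1)).withDensity fun t => ENNReal.ofReal ((2 - t) ^ 2)⁻¹

lemma paretoMeasure_apply {s : Set ℝ} (hs : MeasurableSet s) :
    paretoMeasure s = ∫⁻ t in s ∩ Iio 1, ENNReal.ofReal ((2 - t) ^ 2)⁻¹ := by
  rw [paretoMeasure, withDensity_apply _ hs, Measure.restrict_restrict hs]

lemma setLIntegral_paretoMeasure {f : ℝ → ENNReal} (hf : Measurable f) {s : Set ℝ}
    (hs : MeasurableSet s) :
    ∫⁻ t in s, f t ∂paretoMeasure = ∫⁻ t in s ∩ Iio 1, ENNReal.ofReal ((2 - t) ^ 2)⁻¹ * f t := by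
  rw [paretoMeasure, setLIntegral_withDensity_eq_setLIntegral_mul _ (by fun_prop) hf hs,
    Measure.restrict_restrict hs]
  rfl

lemma paretoMeasure_Iic_of_lt {a : ℝ} (ha : a < 1) :
    paretoMeasure (Iic a) = ENNReal.ofReal (2 - a)⁻¹ := by
  rw [paretoMeasure_apply measurableSet_Iic, inter_eq_left.2 (Iic_subset_Iio.2 ha),
    lintegral_Iic_inv_two_sub_sq (by linarith)]

lemma paretoMeasure_Iic_of_le {a : ℝ} (ha : 1 ≤ a) : paretoMeasure (Iic a) = 1 := by
  rw [paretoMeasure_apply measurableSet_Iic,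
    inter_eq_right.2 (Iio_subset_Iic_self.trans (Iic_subset_Iic.2 ha)),
    Measure.restrict_congr_set Iio_ae_eq_Iic, lintegral_Iic_inv_two_sub_sq one_lt_two]
  norm_num

lemma map_eq_paretoMeasure {Ω : Type*} [MeasurableSpace Ω] {μ : Measure Ω} [IsFiniteMeasure μ]
    {X : Ω → ℝ} (hX : Measurable X)
    (hcdf : ∀ x : ℝ, x < 1 → μ {ω | X ω ≤ x} = ENNReal.ofReal ((2 - x)⁻¹))
    (hcdf' : ∀ x : ℝ, 1 ≤ x → μ {ω | X ω ≤ x} = 1) :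
    μ.map X = paretoMeasure := by
  refine Measure.ext_of_Iic _ _ fun a => ?_
  rw [Measure.map_apply hX measurableSet_Iic]
  rcases lt_or_ge a 1 with ha | ha
  · exact (hcdf a ha).trans (paretoMeasure_Iic_of_lt ha).symm
  · exact (hcdf' a ha).trans (paretoMeasure_Iic_of_le ha).symm

lemma hasDerivAt_antideriv_inv_two_sub_sq_mul_inv {x t : ℝ} (h₁ : 0 < 2 - x + t)
    (h₂ : 0 < 2 - t) :
    HasDerivAt (fun t => (4 - x)⁻¹ * (2 - t)⁻¹
        + ((4 - x) ^ 2)⁻¹ * (Real.log (2 - x + t) - Real.log (2 - t)))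
      (((2 - t) ^ 2)⁻¹ * (2 - x + t)⁻¹) t := by
  have hlog₁ := ((hasDerivAt_id' t).const_add (2 - x)).log h₁.ne'
  have hlog₂ := ((hasDerivAt_id' t).const_sub 2).log h₂.ne'
  refine (((hasDerivAt_inv_two_sub (by linarith)).const_mul _).add
    ((hlog₁.sub hlog₂).const_mul _)).congr_deriv ?_
  have : (4 : ℝ) - x ≠ 0 := by linarith
  field_simp
  ring

lemma continuousOn_inv_two_sub_sq_mul_inv (x : ℝ) :
    ContinuousOn (fun t => ((2 - t) ^ 2)⁻¹ * (2 - x + t)⁻¹) (Icc (x - 1) 1) := by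
  intro t ht
  have : (2 : ℝ) - t ≠ 0 := by linarith [ht.2]
  have : (2 : ℝ) - x + t ≠ 0 := by linarith [ht.1]
  have : ((2 : ℝ) - t) ^ 2 ≠ 0 := by positivity
  fun_prop (disch := assumption)

lemma integral_inv_two_sub_sq_mul_inv {x : ℝ} (hx : x < 2) :
    ∫ t in x - 1..1, ((2 - t) ^ 2)⁻¹ * (2 - x + t)⁻¹
      = 2 / (4 - x) + 2 * Real.log (3 - x) / (4 - x) ^ 2 - (3 - x)⁻¹ := by
  have hle : x - 1 ≤ 1 := by linarith
  rw [intervalIntegral.integral_eq_sub_of_hasDerivAt fun t ht =>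
    hasDerivAt_antideriv_inv_two_sub_sq_mul_inv (by linarith [(uIcc_of_le hle ▸ ht).1])
      (by linarith [(uIcc_of_le hle ▸ ht).2])]
  · have h₃ : (3 : ℝ) - x ≠ 0 := by linarith
    have h₄ : (4 : ℝ) - x ≠ 0 := by linarith
    norm_num [show (2 : ℝ) - x + (x - 1) = 1 by ring, show (2 : ℝ) - (x - 1) = 3 - x by ring,
      show (2 : ℝ) - x + 1 = 3 - x by ring]
    field_simp
    ring
  · exact (continuousOn_inv_two_sub_sq_mul_inv x).intervalIntegrable_of_Icc hle

lemma lintegral_paretoMeasure_Iic_sub {x : ℝ} (hx : x < 2) :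
    ∫⁻ a, paretoMeasure (Iic (x - a)) ∂paretoMeasure
      = ENNReal.ofReal (2 / (4 - x) + 2 * Real.log (3 - x) / (4 - x) ^ 2) := by
  have hleft : ∫⁻ a in Iic (x - 1), paretoMeasure (Iic (x - a)) ∂paretoMeasure
      = ENNReal.ofReal (3 - x)⁻¹ := by
    rw [setLIntegral_congr_fun measurableSet_Iic
      (fun a ha => paretoMeasure_Iic_of_le (by linarith [ha.out])), setLIntegral_one,
      paretoMeasure_Iic_of_lt (by linarith)]
    ring_nf
  have hright : ∫⁻ a in Ioi (x - 1), paretoMeasure (Iic (x - a)) ∂paretoMeasure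
      = ENNReal.ofReal (∫ t in x - 1..1, ((2 - t) ^ 2)⁻¹ * (2 - x + t)⁻¹) := by
    rw [setLIntegral_congr_fun measurableSet_Ioi
      (fun a ha => paretoMeasure_Iic_of_lt (by linarith [ha.out])),
      setLIntegral_paretoMeasure (by fun_prop) measurableSet_Ioi, Ioi_inter_Iio,
      intervalIntegral.integral_of_le (by linarith), integral_Ioc_eq_integral_Ioo,
      ofReal_integral_eq_lintegral_ofReal]
    · refine setLIntegral_congr_fun measurableSet_Ioo fun t ht => ?_
      rw [ENNReal.ofReal_mul (by positivity), sub_sub_eq_add_sub, add_sub_right_comm]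
    · exact (continuousOn_inv_two_sub_sq_mul_inv x).integrableOn_Icc.mono_set Ioo_subset_Icc_self
    · refine (ae_restrict_iff' measurableSet_Ioo).2 (Eventually.of_forall fun t ht => ?_)
      have : 0 < 2 - x + t := by linarith [ht.1]
      positivity
  have hnonneg : 0 ≤ ∫ t in x - 1..1, ((2 - t) ^ 2)⁻¹ * (2 - x + t)⁻¹ := by
    refine intervalIntegral.integral_nonneg (by linarith) fun t ht => ?_
    have : 0 < 2 - x + t := by linarith [ht.1]
    positivity
  rw [← lintegral_add_compl _ measurableSet_Iic, compl_Iic, hleft, hright,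
    ← ENNReal.ofReal_add (inv_nonneg.2 (by linarith)) hnonneg,
    integral_inv_two_sub_sq_mul_inv hx, add_sub_cancel]

/-- The distribution function of the sum of two independent Pareto-distributed
random variables with `P[Xᵢ ≤ x] = (2-x)⁻¹` for `x < 1`. -/
theorem pareto_sum_cdf {Ω : Type*} [MeasurableSpace Ω] (μ : Measure Ω)
    [IsProbabilityMeasure μ] (X₁ X₂ : Ω → ℝ) (h₁ : Measurable X₁) (h₂ : Measurable X₂)
    (hInd : ProbabilityTheory.IndepFun X₁ X₂ μ)
    (hcdf₁ : ∀ x : ℝ, x < 1 → μ {ω | X₁ ω ≤ x} = ENNReal.ofReal ((2 - x)⁻¹))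
    (hcdf₁' : ∀ x : ℝ, 1 ≤ x → μ {ω | X₁ ω ≤ x} = 1)
    (hcdf₂ : ∀ x : ℝ, x < 1 → μ {ω | X₂ ω ≤ x} = ENNReal.ofReal ((2 - x)⁻¹))
    (hcdf₂' : ∀ x : ℝ, 1 ≤ x → μ {ω | X₂ ω ≤ x} = 1) :
    ∀ x : ℝ, x < 2 → μ {ω | X₁ ω + X₂ ω ≤ x}
      = ENNReal.ofReal (2 / (4 - x) + 2 * Real.log (3 - x) / (4 - x) ^ 2) := by
  intro x hx
  rw [hInd.measure_add_le_eq_lintegral h₁ h₂, map_eq_paretoMeasure h₁ hcdf₁ hcdf₁',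
    map_eq_paretoMeasure h₂ hcdf₂ hcdf₂']
  exact lintegral_paretoMeasure_Iic_sub hx
end

section
/- Let ρ : {(u,v) ∈ ℝ² : u > 0, v > 0} → ℝ be positively homogeneous (ρ(h·u, h·v) = h·ρ(u,v) for all h > 0 and u,v > 0) and differentiable. If ρ is subadditive on the open positive quadrant, i.e. ρ(u₁+u₂, v₁+v₂) ≤ ρ(u₁,v₁) + ρ(u₂,v₂) for all u₁,u₂,v₁,v₂ > 0, then for all u₁,u₂,v₁,v₂ > 0: u₁·(∂ρ/∂u)(u₁+u₂, v₁+v₂) + v₁·(∂ρ/∂v)(u₁+u₂, v₁+v₂) ≤ ρ(u₁,v₁). -/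
/-- For a positively homogeneous differentiable risk measure `ρ(u,v) = ρ(uX + vY)` on the
open positive quadrant, subadditivity implies that each risk contribution
`u₁·∂ρ/∂u(u₁+u₂, v₁+v₂) + v₁·∂ρ/∂v(u₁+u₂, v₁+v₂)` is bounded by the stand-alone
risk `ρ(u₁, v₁)`. -/
theorem subadditive_implies_contributions_bounded
    (ρ : ℝ × ℝ → ℝ)
    (hdiff : ∀ u v : ℝ, 0 < u → 0 < v → DifferentiableAt ℝ ρ (u, v))
    (hhom : ∀ h : ℝ, 0 < h → ∀ u v : ℝ, 0 < u → 0 < v → ρ (h * u, h * v) = h * ρ (u, v))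
    (hsub : ∀ u₁ v₁ u₂ v₂ : ℝ, 0 < u₁ → 0 < v₁ → 0 < u₂ → 0 < v₂ →
      ρ (u₁ + u₂, v₁ + v₂) ≤ ρ (u₁, v₁) + ρ (u₂, v₂)) :
    ∀ u₁ v₁ u₂ v₂ : ℝ, 0 < u₁ → 0 < v₁ → 0 < u₂ → 0 < v₂ →
      u₁ * fderiv ℝ ρ (u₁ + u₂, v₁ + v₂) (1, 0)
        + v₁ * fderiv ℝ ρ (u₁ + u₂, v₁ + v₂) (0, 1) ≤ ρ (u₁, v₁) := by
  intro u₁ v₁ u₂ v₂ hu₁ hv₁ hu₂ hv₂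
  set w : ℝ × ℝ := (u₁ + u₂, v₁ + v₂) with hw
  set p : ℝ × ℝ := (u₁, v₁) with hp
  set L := fderiv ℝ ρ w with hL
  have hwpos : 0 < u₁ + u₂ ∧ 0 < v₁ + v₂ := ⟨by linarith, by linarith⟩
  have hdw : DifferentiableAt ℝ ρ w := hdiff _ _ hwpos.1 hwpos.2
  -- the line t ↦ w + t • p
  have hline : HasDerivAt (fun t : ℝ => w + t • p) p 0 := by
    simpa using ((hasDerivAt_id (0 : ℝ)).smul_const p).const_add w
  have hψ : HasDerivAt (fun t : ℝ => ρ (w + t • p)) (L p) 0 := by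
    have hfd : HasFDerivAt ρ L (w + (0 : ℝ) • p) := by simpa using hdw.hasFDerivAt
    exact hfd.comp_hasDerivAt 0 hline
  -- one-sided bound on slopes
  have hslope : ∀ t ∈ Set.Ioi (0 : ℝ), slope (fun t : ℝ => ρ (w + t • p)) 0 t ≤ ρ p := by
    intro t ht
    have ht' : (0 : ℝ) < t := ht
    have h1 : w + t • p = ((u₁ + u₂) + t * u₁, (v₁ + v₂) + t * v₁) := by
      simp [hw, hp, Prod.ext_iff, Prod.smul_def, smul_eq_mul]
    have h2 : ρ ((u₁ + u₂) + t * u₁, (v₁ + v₂) + t * v₁) ≤ ρ w + ρ (t * u₁, t * v₁) :=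
      hsub _ _ _ _ hwpos.1 hwpos.2 (by positivity) (by positivity)
    have h3 : ρ (t * u₁, t * v₁) = t * ρ p := hhom t ht' u₁ v₁ hu₁ hv₁
    have hb : ρ (w + t • p) - ρ (w + (0 : ℝ) • p) ≤ t * ρ p := by
      rw [h1]
      have : ρ (w + (0 : ℝ) • p) = ρ w := by norm_num
      rw [this]
      linarith [h2, h3.le]
    rw [slope_def_field]
    rw [div_le_iff₀ (by simpa using ht')] at *
    · simpa [sub_zero, mul_comm] using hb
  -- take the limit from the right
  have hd : HasDerivWithinAt (fun t : ℝ => ρ (w + t • p)) (L p) (Set.Ioi 0) 0 :=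
    hψ.hasDerivWithinAt
  have htend := (hasDerivWithinAt_iff_tendsto_slope.mp hd)
  have hne : (nhdsWithin (0 : ℝ) (Set.Ioi 0 \ {0})).NeBot := by
    rw [Set.diff_singleton_eq_self (by simp)]
    infer_instance
  have hLp : L p ≤ ρ p := by
    refine le_of_tendsto htend ?_
    filter_upwards [self_mem_nhdsWithin] with t ht
    exact hslope t ht.1
  -- rewrite L p via linearity
  have hsplit : p = u₁ • ((1 : ℝ), (0 : ℝ)) + v₁ • ((0 : ℝ), (1 : ℝ)) := by
    simp [hp, Prod.ext_iff]
  calc u₁ * L (1, 0) + v₁ * L (0, 1) = L p := by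
        rw [hsplit, map_add, map_smul, map_smul]; simp [smul_eq_mul]
    _ ≤ ρ p := hLp
end

section
/- Let α ∈ (0,1) and let X be a real random variable with E[max(0,−X)] < ∞. Then ES_α(X) = min over s ∈ ℝ of −(1−α)^{−1}( E[X·1{−X ≥ s}] + s·(α − P[−X < s]) ); in particular the infimum over s of this expression is attained and equals ES_α(X). -/
open MeasureTheory Set

/-- The `α`-quantile of a real random variable `X`:
`q_α(X) = inf {x ∈ ℝ : P[X ≤ x] ≥ α}`. -/
noncomputable def quantile {Ω : Type*} [MeasurableSpace Ω] (μ : Measure Ω)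
    (X : Ω → ℝ) (α : ℝ) : ℝ :=
  sInf {x : ℝ | ENNReal.ofReal α ≤ μ {ω | X ω ≤ x}}

/-- Expected Shortfall at level `α`:
`ES_α(X) = -(1-α)⁻¹ (E[X·1{-X ≥ q_α(-X)}] + q_α(-X)·(α - P[-X < q_α(-X)]))`. -/
noncomputable def ES {Ω : Type*} [MeasurableSpace Ω] (μ : Measure Ω)
    (X : Ω → ℝ) (α : ℝ) : ℝ :=
  - (1 - α)⁻¹ * ((∫ ω in {ω | quantile μ (fun ω' => - X ω') α ≤ - X ω}, X ω ∂μ)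
    + quantile μ (fun ω' => - X ω') α
      * (α - (μ {ω | - X ω < quantile μ (fun ω' => - X ω') α}).toReal))

/-- The objective function `s ↦ -(1-α)⁻¹ (E[X·1{-X ≥ s}] + s·(α - P[-X < s]))`. -/
noncomputable def shortfallObjective {Ω : Type*} [MeasurableSpace Ω] (μ : Measure Ω)
    (X : Ω → ℝ) (α : ℝ) (s : ℝ) : ℝ :=
  - (1 - α)⁻¹ * ((∫ ω in {ω | s ≤ - X ω}, X ω ∂μ) + s * (α - (μ {ω | - X ω < s}).toReal))

/-!
With `Y = -X`, the objective equals `(1-α)⁻¹ (E[(Y - s)⁺] + s (1 - α))`. This is a convex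
function of `s` with left derivative `P[Y < s] - α` and right derivative `P[Y ≤ s] - α`, so it is
minimal at every `q` with `P[Y < q] ≤ α ≤ P[Y ≤ q]`. The quantile `q = q_α(Y)` is such a point:
the first inequality comes from the left limit of the distribution function, the second from its
right continuity. `ES_α(X)` is by definition the objective at this `q`.
-/

open Filter Topology ProbabilityTheory

section GeneralizedInverse

variable {f : ℝ → ℝ} {α : ℝ}

lemma nonempty_setOf_le_of_tendsto_atTop {l : ℝ} (hf : Tendsto f atTop (𝓝 l)) (hα : α < l) :
    {x | α ≤ f x}.Nonempty :=
  (hf.eventually (eventually_ge_nhds hα)).exists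

lemma bddBelow_setOf_le_of_tendsto_atBot {l : ℝ} (hf : Tendsto f atBot (𝓝 l)) (hα : l < α) :
    BddBelow {x | α ≤ f x} := by
  obtain ⟨b, hb⟩ := eventually_atBot.1 (hf.eventually (eventually_lt_nhds hα))
  refine ⟨b, fun x hx => le_of_not_ge fun hxb => ?_⟩
  exact (hb x hxb).not_ge hx

lemma StieltjesFunction.le_apply_sInf_setOf_le (F : StieltjesFunction ℝ)
    (hne : {x | α ≤ F x}.Nonempty) (hbdd : BddBelow {x | α ≤ F x}) :
    α ≤ F (sInf {x | α ≤ F x}) := by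
  refine ge_of_tendsto ((F.right_continuous _).mono Ioi_subset_Ici_self)
    (eventually_nhdsWithin_of_forall fun x hx => ?_)
  obtain ⟨y, hy, hyx⟩ := (csInf_lt_iff hbdd hne).1 hx
  exact hy.trans (F.mono hyx.le)

lemma Monotone.leftLim_sInf_setOf_le_le (hf : Monotone f) (hbdd : BddBelow {x | α ≤ f x}) :
    Function.leftLim f (sInf {x | α ≤ f x}) ≤ α := by
  refine _root_.le_of_tendsto (hf.tendsto_leftLim _)
    (eventually_nhdsWithin_of_forall fun x hx => ?_)
  exact le_of_not_ge fun hαx => (not_le_of_gt hx) (csInf_le hbdd hαx)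

end GeneralizedInverse

section Quantile

variable {Ω : Type*} [MeasurableSpace Ω] {μ : Measure Ω} [IsProbabilityMeasure μ] {Y : Ω → ℝ}
  {α : ℝ}

lemma quantile_eq_sInf_cdf (hY : Measurable Y) :
    quantile μ Y α = sInf {x | α ≤ cdf (μ.map Y) x} := by
  have := Measure.isProbabilityMeasure_map (μ := μ) hY.aemeasurable
  refine congrArg sInf (Set.ext fun x => ?_)
  show ENNReal.ofReal α ≤ μ {ω | Y ω ≤ x} ↔ α ≤ cdf (μ.map Y) x
  rw [← ENNReal.ofReal_le_ofReal_iff (cdf_nonneg _ x), ofReal_cdf,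
    Measure.map_apply hY measurableSet_Iic]
  rfl

lemma le_measureReal_le_quantile (hY : Measurable Y) (hα : α ∈ Ioo 0 1) :
    α ≤ μ.real {ω | Y ω ≤ quantile μ Y α} := by
  have := Measure.isProbabilityMeasure_map (μ := μ) hY.aemeasurable
  have hcdf : μ.real {ω | Y ω ≤ quantile μ Y α} = cdf (μ.map Y) (quantile μ Y α) := by
    rw [cdf_eq_real, map_measureReal_apply hY measurableSet_Iic]
    rfl
  rw [hcdf, quantile_eq_sInf_cdf hY]
  exact (cdf _).le_apply_sInf_setOf_le
    (nonempty_setOf_le_of_tendsto_atTop (tendsto_cdf_atTop _) hα.2)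
    (bddBelow_setOf_le_of_tendsto_atBot (tendsto_cdf_atBot _) hα.1)

lemma measureReal_lt_quantile_le (hY : Measurable Y) (hα : α ∈ Ioo 0 1) :
    μ.real {ω | Y ω < quantile μ Y α} ≤ α := by
  have := Measure.isProbabilityMeasure_map (μ := μ) hY.aemeasurable
  have hbdd := bddBelow_setOf_le_of_tendsto_atBot (tendsto_cdf_atBot (μ.map Y)) hα.1
  have hmeas : μ {ω | Y ω < quantile μ Y α} = (cdf (μ.map Y)).measure (Iio (quantile μ Y α)) := by
    rw [measure_cdf, Measure.map_apply hY measurableSet_Iio]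
    rfl
  rw [measureReal_def, hmeas, (cdf _).measure_Iio (tendsto_cdf_atBot _), sub_zero,
    quantile_eq_sInf_cdf hY]
  exact ENNReal.toReal_le_of_le_ofReal hα.1.le
    (ENNReal.ofReal_le_ofReal ((monotone_cdf _).leftLim_sInf_setOf_le_le hbdd))

end Quantile

lemma max_sub_zero_le_add_ite {y q s : ℝ} (h : q ≤ s) :
    max (y - q) 0 ≤ max (y - s) 0 + if q < y then s - q else 0 := by
  split_ifs <;> grind

lemma max_sub_zero_add_ite_le {y q s : ℝ} (h : s ≤ q) :
    max (y - q) 0 + (if q ≤ y then q - s else 0) ≤ max (y - s) 0 := by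
  split_ifs <;> grind

section StopLoss

variable {Ω : Type*} [MeasurableSpace Ω] {μ : Measure Ω} {Y : Ω → ℝ}

lemma integrable_max_sub_zero [IsFiniteMeasure μ] (hY : Measurable Y)
    (hint : Integrable (fun ω => max 0 (Y ω)) μ) (s : ℝ) :
    Integrable (fun ω => max (Y ω - s) 0) μ := by
  refine (hint.add (integrable_const |s|)).mono'
    ((hY.sub measurable_const).max measurable_const).aestronglyMeasurable (ae_of_all _ fun ω => ?_)
  rw [Real.norm_eq_abs, abs_of_nonneg (le_max_right _ _), Pi.add_apply]
  exact max_le (by linarith [le_max_right 0 (Y ω), neg_le_abs s])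
    (add_nonneg (le_max_left _ _) (abs_nonneg s))

variable [IsProbabilityMeasure μ] {α q : ℝ}

lemma integral_max_sub_zero_add_mul_le_of_le (hY : Measurable Y)
    (hint : Integrable (fun ω => max 0 (Y ω)) μ) (hq : α ≤ μ.real {ω | Y ω ≤ q}) {s : ℝ}
    (hqs : q ≤ s) :
    ∫ ω, max (Y ω - q) 0 ∂μ + q * (1 - α) ≤ ∫ ω, max (Y ω - s) 0 ∂μ + s * (1 - α) := by
  have hA : MeasurableSet {ω | q < Y ω} := measurableSet_lt measurable_const hY
  have hcompl : μ.real {ω | q < Y ω} = 1 - μ.real {ω | Y ω ≤ q} := by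
    rw [← probReal_compl_eq_one_sub (measurableSet_le hY measurable_const)]
    congr 1
    ext ω
    simp [not_le]
  have hpointwise : ∫ ω, max (Y ω - q) 0 ∂μ
      ≤ ∫ ω, max (Y ω - s) 0 ∂μ + μ.real {ω | q < Y ω} * (s - q) := by
    rw [← smul_eq_mul, ← integral_indicator_const _ hA,
      ← integral_add (integrable_max_sub_zero hY hint s) ((integrable_const _).indicator hA)]
    refine integral_mono (integrable_max_sub_zero hY hint q)
      ((integrable_max_sub_zero hY hint s).add ((integrable_const _).indicator hA)) fun ω => ?_
    simpa [indicator_apply] using max_sub_zero_le_add_ite (y := Y ω) hqs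
  have hmass : μ.real {ω | q < Y ω} * (s - q) ≤ (1 - α) * (s - q) :=
    mul_le_mul_of_nonneg_right (by linarith) (sub_nonneg.2 hqs)
  linarith

lemma integral_max_sub_zero_add_mul_le_of_ge (hY : Measurable Y)
    (hint : Integrable (fun ω => max 0 (Y ω)) μ) (hq : μ.real {ω | Y ω < q} ≤ α) {s : ℝ}
    (hsq : s ≤ q) :
    ∫ ω, max (Y ω - q) 0 ∂μ + q * (1 - α) ≤ ∫ ω, max (Y ω - s) 0 ∂μ + s * (1 - α) := by
  have hA : MeasurableSet {ω | q ≤ Y ω} := measurableSet_le measurable_const hY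
  have hcompl : μ.real {ω | q ≤ Y ω} = 1 - μ.real {ω | Y ω < q} := by
    rw [← probReal_compl_eq_one_sub (measurableSet_lt hY measurable_const)]
    congr 1
    ext ω
    simp [not_lt]
  have hpointwise : ∫ ω, max (Y ω - q) 0 ∂μ + μ.real {ω | q ≤ Y ω} * (q - s)
      ≤ ∫ ω, max (Y ω - s) 0 ∂μ := by
    rw [← smul_eq_mul, ← integral_indicator_const _ hA,
      ← integral_add (integrable_max_sub_zero hY hint q) ((integrable_const _).indicator hA)]
    refine integral_mono ((integrable_max_sub_zero hY hint q).add
      ((integrable_const _).indicator hA)) (integrable_max_sub_zero hY hint s) fun ω => ?_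
    simpa [indicator_apply] using max_sub_zero_add_ite_le (y := Y ω) hsq
  have hmass : (1 - α) * (q - s) ≤ μ.real {ω | q ≤ Y ω} * (q - s) :=
    mul_le_mul_of_nonneg_right (by linarith) (sub_nonneg.2 hsq)
  linarith

lemma integral_max_sub_zero_add_mul_le (hY : Measurable Y)
    (hint : Integrable (fun ω => max 0 (Y ω)) μ) (hq_lt : μ.real {ω | Y ω < q} ≤ α)
    (hq_le : α ≤ μ.real {ω | Y ω ≤ q}) (s : ℝ) :
    ∫ ω, max (Y ω - q) 0 ∂μ + q * (1 - α) ≤ ∫ ω, max (Y ω - s) 0 ∂μ + s * (1 - α) :=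
  (le_total q s).elim (integral_max_sub_zero_add_mul_le_of_le hY hint hq_le)
    (integral_max_sub_zero_add_mul_le_of_ge hY hint hq_lt)

end StopLoss

lemma shortfallObjective_eq {Ω : Type*} [MeasurableSpace Ω] {μ : Measure Ω}
    [IsProbabilityMeasure μ] {X : Ω → ℝ} (hX : Measurable X)
    (hint : Integrable (fun ω => max 0 (-X ω)) μ) (α s : ℝ) :
    shortfallObjective μ X α s = (1 - α)⁻¹ * (∫ ω, max (-X ω - s) 0 ∂μ + s * (1 - α)) := by
  have hY : Measurable fun ω => -X ω := hX.neg
  set A := {ω | s ≤ -X ω}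
  have hA : MeasurableSet A := measurableSet_le measurable_const hY
  have hind : (fun ω => max (-X ω - s) 0) = A.indicator (fun ω => -X ω - s) := by
    funext ω
    by_cases h : s ≤ -X ω
    · simp [A, h]
    · simp [A, h, (not_le.1 h).le]
  have hintA : IntegrableOn (fun ω => -X ω - s) A μ :=
    (integrable_indicator_iff hA).1 (hind ▸ integrable_max_sub_zero hY hint s)
  have hXA : ∫ ω in A, X ω ∂μ = -∫ ω, max (-X ω - s) 0 ∂μ - s * μ.real A := by
    calc ∫ ω in A, X ω ∂μ = ∫ ω in A, (-(-X ω - s) - s) ∂μ := by simp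
      _ = -∫ ω in A, (-X ω - s) ∂μ - s * μ.real A := by
        rw [integral_sub hintA.fun_neg (integrable_const s), integral_neg, setIntegral_const,
          smul_eq_mul, mul_comm]
      _ = -∫ ω, max (-X ω - s) 0 ∂μ - s * μ.real A := by rw [hind, integral_indicator hA]
  have hcompl : μ.real A = 1 - μ.real {ω | -X ω < s} := by
    rw [← probReal_compl_eq_one_sub (measurableSet_lt hY measurable_const)]
    congr 1
    ext ω
    simp [A, not_lt]
  rw [shortfallObjective, ← measureReal_def, hXA, hcompl]
  ring

/-- Expected Shortfall is the minimum over `s ∈ ℝ` of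
`-(1-α)⁻¹ (E[X·1{-X ≥ s}] + s·(α - P[-X < s]))`; in particular the infimum is attained. -/
theorem es_eq_min_shortfallObjective {Ω : Type*} [MeasurableSpace Ω] (μ : Measure Ω)
    [IsProbabilityMeasure μ] (α : ℝ) (hα : α ∈ Set.Ioo (0 : ℝ) 1)
    (X : Ω → ℝ) (hX : Measurable X)
    (hint : Integrable (fun ω => max 0 (- X ω)) μ) :
    IsLeast (Set.range (shortfallObjective μ X α)) (ES μ X α) := by
  set q := quantile μ (fun ω => -X ω) α
  refine ⟨⟨q, rfl⟩, ?_⟩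
  rintro _ ⟨s, rfl⟩
  change shortfallObjective μ X α q ≤ shortfallObjective μ X α s
  rw [shortfallObjective_eq hX hint, shortfallObjective_eq hX hint]
  have h1α : 0 ≤ (1 - α)⁻¹ := inv_nonneg.2 (sub_nonneg.2 hα.2.le)
  exact mul_le_mul_of_nonneg_left (integral_max_sub_zero_add_mul_le hX.neg hint
    (measureReal_lt_quantile_le hX.neg hα) (le_measureReal_le_quantile hX.neg hα) s) h1α
end

section
/- Let (Ω, ℱ, P) be a standard non-atomic probability space (i.e. there exists a random variable on it uniformly distributed on (0,1)). Let ν : ℱ → [0,1] be a set function with ν(∅) = 0 and ν(Ω) = 1 that is monotone (A ⊆ B ⟹ ν(A) ≤ ν(B)), super-modular (ν(A) + ν(B) ≤ ν(A ∪ B) + ν(A ∩ B) for all A, B ∈ ℱ), and law invariant in the sense that P[A] = P[B] implies ν(A) = ν(B). Then the function F₀ : [0,1] → [0,1] defined by F₀(u) = ν(A) for any A ∈ ℱ with P[A] = u is well-defined, non-decreasing, and convex. -/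
open MeasureTheory Set

lemma dyadic_convex (F : ℝ → ℝ)
    (hm : ∀ a b : ℝ, a ∈ Icc (0:ℝ) 1 → b ∈ Icc (0:ℝ) 1 → a ≤ b →
      2 * F ((a+b)/2) ≤ F a + F b) :
    ∀ n p : ℕ, p ≤ 2^n → ∀ a b : ℝ, a ∈ Icc (0:ℝ) 1 → b ∈ Icc (0:ℝ) 1 → a ≤ b →
      F (a + ((p:ℝ)/2^n) * (b-a)) ≤ F a + ((p:ℝ)/2^n) * (F b - F a) := by
  intro n
  induction n with
  | zero =>
    intro p hp a b ha hb hab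
    interval_cases p
    · simp
    · norm_num
  | succ n ih =>
    intro p hp a b ha hb hab
    have h2 : (2:ℕ)^(n+1) = 2*2^n := by ring
    rcases Nat.even_or_odd p with ⟨m, hm2⟩ | ⟨m, hm2⟩
    · subst hm2
      have hm' : m ≤ 2^n := by omega
      have : ((m+m : ℕ):ℝ)/2^(n+1) = (m:ℝ)/2^n := by push_cast; ring
      rw [this]
      exact ih m hm' a b ha hb hab
    · subst hm2
      have hm1 : m ≤ 2^n := by omega
      have hm2' : m + 1 ≤ 2^n := by omega
      have h2n : (0:ℝ) < 2^n := by positivity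
      set t1 : ℝ := (m:ℝ)/2^n with ht1
      set t2 : ℝ := ((m:ℝ)+1)/2^n with ht2
      have ht10 : 0 ≤ t1 := by positivity
      have ht11 : t1 ≤ 1 := by rw [ht1, div_le_one h2n]; exact_mod_cast hm1
      have ht20 : 0 ≤ t2 := by positivity
      have ht21 : t2 ≤ 1 := by
        rw [ht2, div_le_one h2n]
        have : ((m:ℝ)+1) = ((m+1 : ℕ):ℝ) := by push_cast; ring
        rw [this]; exact_mod_cast hm2'
      have ht12 : t1 ≤ t2 := by
        apply div_le_div_of_nonneg_right (by linarith) h2n.le |>.trans_eq rfl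
      set c : ℝ := a + t1*(b-a) with hc
      set d : ℝ := a + t2*(b-a) with hd
      have hba : 0 ≤ b - a := by linarith
      have hcm : c ∈ Icc (0:ℝ) 1 := by
        constructor
        · nlinarith [ha.1]
        · nlinarith [hb.2]
      have hdm : d ∈ Icc (0:ℝ) 1 := by
        constructor
        · nlinarith [ha.1]
        · nlinarith [hb.2]
      have hcd : c ≤ d := by nlinarith
      have key := hm c d hcm hdm hcd
      have hic := ih m hm1 a b ha hb hab
      have hid := ih (m+1) hm2' a b ha hb hab
      have e1 : (c+d)/2 = a + (((2*m+1 : ℕ):ℝ)/2^(n+1)) * (b-a) := by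
        rw [hc, hd, ht1, ht2]; push_cast; field_simp; ring
      have e2 : (t1 + t2)/2 = ((2*m+1 : ℕ):ℝ)/2^(n+1) := by
        rw [ht1, ht2]; push_cast; field_simp; ring
      have e3 : ((m:ℝ)+1)/2^n = (((m+1:ℕ)):ℝ)/2^n := by push_cast; ring
      rw [← e1, ← e2]
      rw [← ht1] at hic
      rw [← e3, ← ht2] at hid
      rw [← hc] at hic
      rw [← hd] at hid
      linarith

lemma convex_of_dyadic (F : ℝ → ℝ)
    (hmono : MonotoneOn F (Icc (0:ℝ) 1))
    (hb : ∀ u ∈ Icc (0:ℝ) 1, F u ∈ Icc (0:ℝ) 1)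
    (hd : ∀ n p : ℕ, p ≤ 2^n → ∀ a b : ℝ, a ∈ Icc (0:ℝ) 1 → b ∈ Icc (0:ℝ) 1 → a ≤ b →
      F (a + ((p:ℝ)/2^n) * (b-a)) ≤ F a + ((p:ℝ)/2^n) * (F b - F a)) :
    ConvexOn ℝ (Icc (0:ℝ) 1) F := by
  have key : ∀ a b : ℝ, a ∈ Icc (0:ℝ) 1 → b ∈ Icc (0:ℝ) 1 → a ≤ b → ∀ t : ℝ,
      0 ≤ t → t ≤ 1 → F (a + t*(b-a)) ≤ F a + t*(F b - F a) := by
    intro a b ha hb' hab t ht0 ht1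
    rcases eq_or_lt_of_le ht1 with rfl | htlt
    · simp
    have hFab : 0 ≤ F b - F a := by
      have := hmono ha hb' hab; linarith
    have hFab1 : F b - F a ≤ 1 := by
      have h1 := hb a ha; have h2 := hb b hb'
      simp only [mem_Icc] at h1 h2; linarith
    have hba : 0 ≤ b - a := by linarith
    refine le_of_forall_pos_le_add ?_
    intro ε hε
    obtain ⟨n, hn⟩ := exists_pow_lt_of_lt_one (lt_min (by linarith : (0:ℝ) < 1 - t) hε)
      (by norm_num : (1/2:ℝ) < 1)
    have h2n : (0:ℝ) < 2^n := by positivity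
    have hhalf : ((1:ℝ)/2)^n = 1/2^n := by rw [div_pow]; norm_num
    rw [hhalf] at hn
    have hn1 : 1/(2:ℝ)^n < 1 - t := lt_of_lt_of_le hn (min_le_left _ _)
    have hn2 : 1/(2:ℝ)^n < ε := lt_of_lt_of_le hn (min_le_right _ _)
    set p : ℕ := ⌈t * 2^n⌉₊ with hp
    have htp : t ≤ (p:ℝ)/2^n := by
      rw [le_div_iff₀ h2n]; exact Nat.le_ceil _
    have hpt : (p:ℝ) < t * 2^n + 1 := Nat.ceil_lt_add_one (by positivity)
    have hinv : (1/(2:ℝ)^n)*2^n = 1 := by field_simp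
    have hple : p ≤ 2^n := by
      have h : (p:ℝ) ≤ ((2^n : ℕ):ℝ) := by
        push_cast
        nlinarith [mul_lt_mul_of_pos_right hn1 h2n]
      exact_mod_cast h
    have hpu : (p:ℝ)/2^n ≤ t + 1/2^n := by
      rw [div_le_iff₀ h2n]; nlinarith
    have hple1 : (p:ℝ)/2^n ≤ 1 := by
      rw [div_le_one h2n]
      calc (p:ℝ) ≤ ((2^n : ℕ):ℝ) := by exact_mod_cast hple
        _ = 2^n := by push_cast; ring
    have hx : a + t*(b-a) ∈ Icc (0:ℝ) 1 := by
      constructor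
      · nlinarith [ha.1]
      · nlinarith [hb'.2]
    have hy : a + ((p:ℝ)/2^n)*(b-a) ∈ Icc (0:ℝ) 1 := by
      have hp0 : (0:ℝ) ≤ (p:ℝ)/2^n := by positivity
      constructor
      · nlinarith [ha.1]
      · nlinarith [hb'.2]
    have step1 : F (a + t*(b-a)) ≤ F (a + ((p:ℝ)/2^n)*(b-a)) := by
      apply hmono hx hy
      nlinarith
    have step2 := hd n p hple a b ha hb' hab
    have step3 : ((p:ℝ)/2^n) * (F b - F a) ≤ t*(F b - F a) + ε := by
      nlinarith
    linarith
  refine ⟨convex_Icc 0 1, ?_⟩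
  intro x hx y hy s t hs ht hst
  rcases le_total x y with hxy | hxy
  · have := key x y hx hy hxy t ht (by linarith)
    have hs' : s = 1 - t := by linarith
    have e1 : s • x + t • y = x + t*(y-x) := by
      simp only [smul_eq_mul]; rw [hs']; ring
    have e2 : s • F x + t • F y = F x + t*(F y - F x) := by
      simp only [smul_eq_mul]; rw [hs']; ring
    rw [e1, e2]; exact this
  · have := key y x hy hx hxy s hs (by linarith)
    have ht' : t = 1 - s := by linarith
    have e1 : s • x + t • y = y + s*(x-y) := by
      simp only [smul_eq_mul]; rw [ht']; ring
    have e2 : s • F x + t • F y = F y + s*(F x - F y) := by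
      simp only [smul_eq_mul]; rw [ht']; ring
    rw [e1, e2]; exact this

/-- On a standard non-atomic probability space, a monotone, super-modular, law invariant
set function `ν` with `ν(∅) = 0` and `ν(Ω) = 1` induces a well-defined function
`F₀ : [0,1] → [0,1]`, `F₀(u) = ν(A)` for `P[A] = u`, which is non-decreasing and convex. -/
theorem distortion_function_convex {Ω : Type*} [MeasurableSpace Ω]
    (μ : Measure Ω) [IsProbabilityMeasure μ]
    (hU : ∃ U : Ω → ℝ, Measurable U ∧
      ∀ u ∈ Set.Ioo (0 : ℝ) 1, μ {ω | U ω ≤ u} = ENNReal.ofReal u)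
    (ν : Set Ω → ℝ)
    (hrange : ∀ A : Set Ω, MeasurableSet A → ν A ∈ Set.Icc (0 : ℝ) 1)
    (hempty : ν ∅ = 0) (huniv : ν Set.univ = 1)
    (hmono : ∀ A B : Set Ω, MeasurableSet A → MeasurableSet B → A ⊆ B → ν A ≤ ν B)
    (hsuper : ∀ A B : Set Ω, MeasurableSet A → MeasurableSet B →
      ν A + ν B ≤ ν (A ∪ B) + ν (A ∩ B))
    (hlaw : ∀ A B : Set Ω, MeasurableSet A → MeasurableSet B → μ A = μ B → ν A = ν B) :
    ∃ F₀ : ℝ → ℝ,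
      (∀ A : Set Ω, MeasurableSet A → F₀ ((μ A).toReal) = ν A) ∧
      (∀ u ∈ Set.Icc (0 : ℝ) 1, F₀ u ∈ Set.Icc (0 : ℝ) 1) ∧
      MonotoneOn F₀ (Set.Icc (0 : ℝ) 1) ∧
      ConvexOn ℝ (Set.Icc (0 : ℝ) 1) F₀ := by
  obtain ⟨U, hUm, hUu⟩ := hU
  set S : ℝ → Set Ω := fun u => if u ≤ 0 then (∅ : Set Ω) else if 1 ≤ u then univ
    else {ω | U ω ≤ u} with hS
  have measS : ∀ u, MeasurableSet (S u) := by
    intro u; simp only [hS]; split_ifs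
    · exact MeasurableSet.empty
    · exact MeasurableSet.univ
    · exact measurableSet_le hUm measurable_const
  have muS : ∀ u ∈ Icc (0:ℝ) 1, μ (S u) = ENNReal.ofReal u := by
    rintro u ⟨hu0, hu1⟩
    by_cases h0 : u ≤ 0
    · have : u = 0 := le_antisymm h0 hu0
      subst this; simp [hS]
    · by_cases h1 : 1 ≤ u
      · have : u = 1 := le_antisymm hu1 h1
        subst this; norm_num [hS]
      · have hSu : S u = {ω | U ω ≤ u} := by simp [hS, h0, h1]
        rw [hSu, hUu u ⟨lt_of_not_ge h0, lt_of_not_ge h1⟩]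
  have Smono : ∀ u v : ℝ, u ≤ v → S u ⊆ S v := by
    intro u v huv
    by_cases hv0 : v ≤ 0
    · have hu0 : u ≤ 0 := le_trans huv hv0
      simp [hS, hu0, hv0]
    · by_cases hv1 : 1 ≤ v
      · simp [hS, hv0, hv1]
      · by_cases hu0 : u ≤ 0
        · simp [hS, hu0]
        · have hu1 : ¬ (1:ℝ) ≤ u := fun h => hv1 (le_trans h huv)
          simp only [hS, if_neg hu0, if_neg hu1, if_neg hv0, if_neg hv1]
          intro x hx; exact le_trans hx huv
  -- exchange inequality from supermodularity + law invariance
  have Exg : ∀ a b h : ℝ, 0 ≤ a → 0 ≤ h → a ≤ b - h → b ≤ 1 →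
      ν (S (b-h)) + ν (S (a+h)) ≤ ν (S b) + ν (S a) := by
    intro a b h ha0 hh0 hab hb1
    have hbh0 : 0 ≤ b - h := le_trans ha0 hab
    have hbhb : b - h ≤ b := by linarith
    have hamem : a ∈ Icc (0:ℝ) 1 := ⟨ha0, by linarith⟩
    have hbhmem : b - h ∈ Icc (0:ℝ) 1 := ⟨hbh0, by linarith⟩
    have hbmem : b ∈ Icc (0:ℝ) 1 := ⟨by linarith, hb1⟩
    have hahmem : a + h ∈ Icc (0:ℝ) 1 := ⟨by linarith, by linarith⟩
    have hSab : S a ⊆ S (b-h) := Smono _ _ hab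
    have hSbb : S (b-h) ⊆ S b := Smono _ _ hbhb
    set Y : Set Ω := S a ∪ (S b \ S (b-h)) with hY
    have measY : MeasurableSet Y := ((measS a).union ((measS b).diff (measS (b-h))))
    have hdisj : Disjoint (S a) (S b \ S (b-h)) :=
      Disjoint.mono_left hSab disjoint_sdiff_right
    have hmuY : μ Y = ENNReal.ofReal (a + h) := by
      rw [hY, measure_union hdisj ((measS b).diff (measS (b-h))),
        measure_diff hSbb (measS (b-h)).nullMeasurableSet (measure_ne_top μ _),
        muS a hamem, muS b hbmem, muS (b-h) hbhmem,
        ← ENNReal.ofReal_sub b hbh0]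
      have : b - (b - h) = h := by ring
      rw [this, ← ENNReal.ofReal_add ha0 hh0]
    have hnuY : ν Y = ν (S (a+h)) :=
      hlaw Y (S (a+h)) measY (measS _) (by rw [hmuY, muS (a+h) hahmem])
    have hsup := hsuper (S (b-h)) Y (measS _) measY
    have hU1 : S (b-h) ∪ Y = S b := by
      rw [hY, ← union_assoc, union_eq_self_of_subset_right hSab, union_diff_cancel hSbb]
    have hI1 : S (b-h) ∩ Y = S a := by
      rw [hY, inter_union_distrib_left, inter_eq_right.mpr hSab,
        (disjoint_sdiff_right).inter_eq, union_empty]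
    rw [hU1, hI1, hnuY] at hsup
    linarith
  set F₀ : ℝ → ℝ := fun u => ν (S u) with hF
  have hmid : ∀ a b : ℝ, a ∈ Icc (0:ℝ) 1 → b ∈ Icc (0:ℝ) 1 → a ≤ b →
      2 * F₀ ((a+b)/2) ≤ F₀ a + F₀ b := by
    intro a b ha hb hab
    have := Exg a b ((b-a)/2) ha.1 (by linarith) (by linarith) hb.2
    have e1 : b - (b-a)/2 = (a+b)/2 := by ring
    have e2 : a + (b-a)/2 = (a+b)/2 := by ring
    rw [e1, e2] at this
    simp only [hF]
    linarith
  have hmonoF : MonotoneOn F₀ (Icc (0:ℝ) 1) := by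
    intro u _ v _ huv
    exact hmono _ _ (measS u) (measS v) (Smono u v huv)
  have hrangeF : ∀ u ∈ Icc (0:ℝ) 1, F₀ u ∈ Icc (0:ℝ) 1 := by
    intro u _; exact hrange _ (measS u)
  refine ⟨F₀, ?_, hrangeF, hmonoF, ?_⟩
  · intro A hA
    have hA1 : μ A ≤ 1 := prob_le_one
    have hu : (μ A).toReal ∈ Icc (0:ℝ) 1 := by
      constructor
      · exact ENNReal.toReal_nonneg
      · simpa using ENNReal.toReal_mono (by norm_num) hA1
    show ν (S ((μ A).toReal)) = ν A
    apply hlaw _ _ (measS _) hA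
    rw [muS _ hu, ENNReal.ofReal_toReal (measure_ne_top μ A)]
  · exact convex_of_dyadic F₀ hmonoF hrangeF (dyadic_convex F₀ hmid)
end

section
/- Let n be a positive integer and let X and Y be real random variables whose distributions are related by P[−Y ≤ t] = 1 − (P[−X > t])^{1/n} for all t ∈ ℝ. If E[max(0,−Y)] < ∞, then E[(max(0,−X))^n] < ∞. -/
open MeasureTheory Set

/-! The relation says exactly that `P[-X > t] = P[-Y > t] ^ n`. Markov's inequality
`t * P[-Y > t] ≤ E[(-Y)⁺] =: G` bounds `t ^ (n - 1) * P[-X > t]` by `G ^ (n - 1) * P[-Y > t]`,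
and integrating over `t > 0` (layer cake formula) gives `E[((-X)⁺) ^ n] ≤ n * G ^ n`. -/

namespace MeasureTheory

variable {α β : Type*} [MeasurableSpace α] [MeasurableSpace β]
  {μ : Measure α} {ν : Measure β}

lemma measure_eq_pow_of_toReal_compl_eq [IsFiniteMeasure μ] [IsProbabilityMeasure ν]
    {n : ℕ} (hn : n ≠ 0) {u : Set α} {s : Set β} (hs : MeasurableSet s)
    (h : (ν sᶜ).toReal = 1 - (μ u).toReal ^ (n : ℝ)⁻¹) : μ u = ν s ^ n := by
  have hroot : (μ u).toReal ^ (n : ℝ)⁻¹ = (ν s).toReal := by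
    have hcompl := probReal_compl_eq_one_sub (μ := ν) hs
    simp only [measureReal_def] at hcompl
    linarith
  rw [← ENNReal.toReal_eq_toReal_iff' (measure_ne_top μ u)
      (ENNReal.pow_ne_top (measure_ne_top ν s)),
    ENNReal.toReal_pow, ← hroot, Real.rpow_inv_natCast_pow ENNReal.toReal_nonneg hn]

lemma ofReal_mul_meas_lt_le_lintegral {g : β → ℝ} (hg : AEMeasurable g ν) (t : ℝ) :
    ENNReal.ofReal t * ν {b | t < g b} ≤ ∫⁻ b, ENNReal.ofReal (g b) ∂ν :=
  (mul_le_mul_right (measure_mono fun _ hb => ENNReal.ofReal_le_ofReal hb.le) _).trans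
    (mul_meas_ge_le_lintegral₀ hg.ennreal_ofReal _)

lemma lintegral_ofReal_pow_le_of_meas_lt_le_pow {f : α → ℝ} {g : β → ℝ}
    (hf : 0 ≤ᵐ[μ] f) (hfm : AEMeasurable f μ) (hg : 0 ≤ᵐ[ν] g) (hgm : AEMeasurable g ν)
    {n : ℕ} (hn : n ≠ 0) (htail : ∀ t > 0, μ {a | t < f a} ≤ ν {b | t < g b} ^ n) :
    ∫⁻ a, ENNReal.ofReal (f a ^ n) ∂μ
      ≤ n * (∫⁻ b, ENNReal.ofReal (g b) ∂ν) ^ n := by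
  obtain ⟨m, rfl⟩ := Nat.exists_eq_succ_of_ne_zero hn
  set G := ∫⁻ b, ENNReal.ofReal (g b) ∂ν
  have hpoint : ∀ t ∈ Ioi (0 : ℝ),
      μ {a | t < f a} * ENNReal.ofReal (t ^ ((↑(m + 1) : ℝ) - 1))
        ≤ G ^ m * ν {b | t < g b} := by
    intro t (ht : 0 < t)
    have hexp : ENNReal.ofReal (t ^ ((↑(m + 1) : ℝ) - 1)) = ENNReal.ofReal t ^ m := by
      rw [Nat.cast_succ, add_sub_cancel_right, Real.rpow_natCast, ENNReal.ofReal_pow ht.le]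
    calc μ {a | t < f a} * ENNReal.ofReal (t ^ ((↑(m + 1) : ℝ) - 1))
        ≤ ν {b | t < g b} ^ (m + 1) * ENNReal.ofReal t ^ m := by
          rw [hexp]; gcongr; exact htail t ht
      _ = (ENNReal.ofReal t * ν {b | t < g b}) ^ m * ν {b | t < g b} := by ring
      _ ≤ G ^ m * ν {b | t < g b} := by
          gcongr; exact ofReal_mul_meas_lt_le_lintegral hgm t
  have hmeas : Measurable fun t : ℝ => ν {b | t < g b} :=
    Antitone.measurable fun _ _ hst => measure_mono fun _ hb => hst.trans_lt hb
  calc ∫⁻ a, ENNReal.ofReal (f a ^ (m + 1)) ∂μ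
      = ∫⁻ a, ENNReal.ofReal (f a ^ ((↑(m + 1) : ℕ) : ℝ)) ∂μ := by
        simp only [Real.rpow_natCast]
    _ = ENNReal.ofReal ↑(m + 1) *
          ∫⁻ t in Ioi 0, μ {a | t < f a} * ENNReal.ofReal (t ^ ((↑(m + 1) : ℝ) - 1)) :=
        lintegral_rpow_eq_lintegral_meas_lt_mul μ hf hfm (by positivity)
    _ ≤ ENNReal.ofReal ↑(m + 1) * ∫⁻ t in Ioi 0, G ^ m * ν {b | t < g b} := by
        gcongr _ * ?_
        exact setLIntegral_mono (measurable_const.mul hmeas) hpoint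
    _ = ↑(m + 1) * G ^ (m + 1) := by
        rw [lintegral_const_mul _ hmeas, ← lintegral_eq_lintegral_meas_lt ν hg hgm,
          ENNReal.ofReal_natCast, pow_succ]

lemma Integrable.pow_of_meas_lt_le_pow {f : α → ℝ} {g : β → ℝ} (hg : Integrable g ν)
    (hf : 0 ≤ᵐ[μ] f) (hfm : AEMeasurable f μ) (hg_nonneg : 0 ≤ᵐ[ν] g)
    {n : ℕ} (hn : n ≠ 0) (htail : ∀ t > 0, μ {a | t < f a} ≤ ν {b | t < g b} ^ n) :
    Integrable (fun a => f a ^ n) μ := by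
  refine ⟨(hfm.pow_const n).aestronglyMeasurable, ?_⟩
  rw [hasFiniteIntegral_iff_ofReal (hf.mono fun _ ha => pow_nonneg ha n)]
  exact (lintegral_ofReal_pow_le_of_meas_lt_le_pow hf hfm hg_nonneg hg.aemeasurable hn
    htail).trans_lt (ENNReal.mul_lt_top (ENNReal.natCast_lt_top n)
      (ENNReal.pow_lt_top hg.lintegral_lt_top))

end MeasureTheory

/-- If `P[-Y ≤ t] = 1 - (P[-X > t])^{1/n}` for all `t` (i.e. the loss `-X` is distributed
like the minimum of `n` independent copies of the loss `-Y`), then integrability of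
`max(0,-Y)` implies integrability of `(max(0,-X))^n`. -/
theorem moment_finiteness_of_min_distribution {Ω Ω' : Type*}
    [MeasurableSpace Ω] [MeasurableSpace Ω']
    (μ : Measure Ω) (ν : Measure Ω') [IsProbabilityMeasure μ] [IsProbabilityMeasure ν]
    (n : ℕ) (hn : 0 < n) (X : Ω → ℝ) (Y : Ω' → ℝ) (hX : Measurable X) (hY : Measurable Y)
    (hrel : ∀ t : ℝ, (ν {ω | - Y ω ≤ t}).toReal
      = 1 - ((μ {ω | t < - X ω}).toReal) ^ ((n : ℝ)⁻¹))
    (hint : Integrable (fun ω => max 0 (- Y ω)) ν) :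
    Integrable (fun ω => (max 0 (- X ω)) ^ n) μ := by
  have htail : ∀ t > 0, μ {ω | t < max 0 (-X ω)} ≤ ν {ω | t < max 0 (-Y ω)} ^ n := by
    intro t ht
    have hcompl : {ω | t < -Y ω}ᶜ = {ω | -Y ω ≤ t} := by ext; simp
    simp only [lt_max_iff, ht.not_gt, false_or]
    refine (measure_eq_pow_of_toReal_compl_eq hn.ne' (s := {ω | t < -Y ω})
      (measurableSet_lt measurable_const hY.neg) ?_).le
    rw [hcompl]
    exact hrel t
  exact hint.pow_of_meas_lt_le_pow (ae_of_all _ fun _ => le_max_left _ _)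
    (measurable_const.max hX.neg).aemeasurable (ae_of_all _ fun _ => le_max_left _ _)
    hn.ne' htail
end

section
/- Let n be a positive integer and let X and Y be real random variables whose distributions are related by P[−Y ≤ t] = 1 − (P[−X > t])^{1/n} for all t ∈ ℝ. If for some ε > 0 one has E[(max(0,−X))^{n+ε}] < ∞, then E[max(0,−Y)] < ∞. -/
/-! Markov's inequality for the moment of order `p = n + ε` bounds the tail of `-X` by
`C t^{-p}`. The distributional relation makes the tail of `-Y` the `n`-th root of the tail of
`-X`, hence at most `C^{1/n} t^{-p/n}`, and `p/n > 1` makes this integrable at infinity; by the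
layer-cake formula that is the integrability of the positive part of `-Y`. -/

open MeasureTheory Set

section

variable {Ω : Type*} [MeasurableSpace Ω] {μ : Measure Ω}

theorem measureReal_lt_le_integral_posPart_rpow_div {g : Ω → ℝ} {p t : ℝ} (hp : 0 < p)
    (ht : 0 < t) (hint : Integrable (fun ω => max 0 (g ω) ^ p) μ) :
    μ.real {ω | t < g ω} ≤ (∫ ω, max 0 (g ω) ^ p ∂μ) / t ^ p := by
  have htp : 0 < t ^ p := Real.rpow_pos_of_pos ht p
  have hsub : {ω | t < g ω} ⊆ {ω | t ^ p ≤ max 0 (g ω) ^ p} := fun ω hω =>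
    Real.rpow_le_rpow ht.le (le_max_of_le_right (le_of_lt hω)) hp.le
  rw [le_div_iff₀ htp, mul_comm]
  calc t ^ p * μ.real {ω | t < g ω}
      ≤ t ^ p * μ.real {ω | t ^ p ≤ max 0 (g ω) ^ p} :=
        mul_le_mul_of_nonneg_left (measureReal_mono hsub (hint.measure_ge_lt_top htp).ne) htp.le
    _ ≤ ∫ ω, max 0 (g ω) ^ p ∂μ :=
        mul_meas_ge_le_integral_of_nonneg
          (Filter.Eventually.of_forall fun ω => Real.rpow_nonneg (le_max_left _ _) _) hint _

theorem integrable_posPart_of_measureReal_lt_le_rpow [IsFiniteMeasure μ] {g : Ω → ℝ}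
    (hg : AEMeasurable g μ) {K q : ℝ} (hq : 1 < q)
    (htail : ∀ t, 1 < t → μ.real {ω | t < g ω} ≤ K * t ^ (-q)) :
    Integrable (fun ω => max 0 (g ω)) μ := by
  have hf0 : 0 ≤ᵐ[μ] fun ω => max 0 (g ω) := Filter.Eventually.of_forall fun _ => le_max_left _ _
  have hf : AEMeasurable (fun ω => max 0 (g ω)) μ := aemeasurable_const.max hg
  refine ⟨hf.aestronglyMeasurable, (hasFiniteIntegral_iff_ofReal hf0).mpr ?_⟩
  have hsets : ∀ t ∈ Ioi (0 : ℝ), μ {ω | t < max 0 (g ω)} = μ {ω | t < g ω} := by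
    intro t ht
    simp only [lt_max_iff, not_lt_of_gt (mem_Ioi.mp ht), false_or]
  rw [lintegral_eq_lintegral_meas_lt μ hf0 hf, setLIntegral_congr_fun measurableSet_Ioi hsets,
    ← Ioc_union_Ioi_eq_Ioi zero_le_one,
    lintegral_union measurableSet_Ioi (Ioc_disjoint_Ioi le_rfl)]
  have hnear : ∫⁻ t in Ioc (0 : ℝ) 1, μ {ω | t < g ω} < ⊤ :=
    calc ∫⁻ t in Ioc (0 : ℝ) 1, μ {ω | t < g ω}
        ≤ ∫⁻ _ in Ioc (0 : ℝ) 1, μ univ :=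
          setLIntegral_mono' measurableSet_Ioc fun _ _ => measure_mono (subset_univ _)
      _ < ⊤ := by simp [measure_lt_top]
  have hfar : ∫⁻ t in Ioi (1 : ℝ), μ {ω | t < g ω} < ⊤ :=
    calc ∫⁻ t in Ioi (1 : ℝ), μ {ω | t < g ω}
        ≤ ∫⁻ t in Ioi (1 : ℝ), ENNReal.ofReal (K * t ^ (-q)) :=
          setLIntegral_mono' measurableSet_Ioi fun t ht => by
            rw [← ofReal_measureReal]
            exact ENNReal.ofReal_le_ofReal (htail t ht)
      _ < ⊤ := ((integrableOn_Ioi_rpow_of_lt (neg_lt_neg hq) one_pos).const_mul K).lintegral_lt_top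
  exact ENNReal.add_lt_top.mpr ⟨hnear, hfar⟩

end

theorem integrability_of_higher_moment_general {Ω Ω' : Type*}
    [MeasurableSpace Ω] [MeasurableSpace Ω']
    (μ : Measure Ω) (ν : Measure Ω') [IsProbabilityMeasure μ] [IsProbabilityMeasure ν]
    (n : ℕ) (hn : 0 < n) (X : Ω → ℝ) (Y : Ω' → ℝ) (hY : Measurable Y)
    (hrel : ∀ t : ℝ, (ν {ω | - Y ω ≤ t}).toReal
      = 1 - ((μ {ω | t < - X ω}).toReal) ^ ((n : ℝ)⁻¹))
    (ε : ℝ) (hε : 0 < ε)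
    (hint : Integrable (fun ω => (max 0 (- X ω)) ^ ((n : ℝ) + ε)) μ) :
    Integrable (fun ω => max 0 (- Y ω)) ν := by
  set p : ℝ := n + ε
  set C : ℝ := ∫ ω, max 0 (- X ω) ^ p ∂μ
  have hn' : (0 : ℝ) < n := Nat.cast_pos.mpr hn
  have hC : 0 ≤ C := integral_nonneg fun ω => Real.rpow_nonneg (le_max_left _ _) _
  have htailY : ∀ t, ν.real {ω | t < - Y ω} = μ.real {ω | t < - X ω} ^ (n : ℝ)⁻¹ := fun t => by
    have hmeas : MeasurableSet {ω | - Y ω ≤ t} := measurableSet_le hY.neg measurable_const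
    have hcompl : {ω | t < - Y ω} = {ω | - Y ω ≤ t}ᶜ := by ext; simp
    rw [hcompl, probReal_compl_eq_one_sub hmeas,
      measureReal_def, hrel t, sub_sub_cancel, measureReal_def]
  refine integrable_posPart_of_measureReal_lt_le_rpow hY.neg.aemeasurable
    (K := C ^ (n : ℝ)⁻¹) (q := p / n) ?_ fun t ht => ?_
  · rw [one_lt_div hn']; linarith
  have ht0 : 0 < t := one_pos.trans ht
  calc ν.real {ω | t < - Y ω} = μ.real {ω | t < - X ω} ^ (n : ℝ)⁻¹ := htailY t
    _ ≤ (C / t ^ p) ^ (n : ℝ)⁻¹ := by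
        gcongr
        exact measureReal_lt_le_integral_posPart_rpow_div (by positivity) ht0 hint
    _ = C ^ (n : ℝ)⁻¹ * t ^ (-(p / n)) := by
        rw [Real.div_rpow hC (by positivity), ← Real.rpow_mul ht0.le, Real.rpow_neg ht0.le,
          div_eq_mul_inv, div_eq_mul_inv]

/-- If `P[-Y ≤ t] = 1 - (P[-X > t])^{1/n}` for all `t` (i.e. the loss `-X` is distributed
like the minimum of `n` independent copies of the loss `-Y`), and if
`E[(max(0,-X))^{n+ε}] < ∞` for some `ε > 0`, then `E[max(0,-Y)] < ∞`. -/
theorem integrability_of_higher_moment {Ω Ω' : Type*}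
    [MeasurableSpace Ω] [MeasurableSpace Ω']
    (μ : Measure Ω) (ν : Measure Ω') [IsProbabilityMeasure μ] [IsProbabilityMeasure ν]
    (n : ℕ) (hn : 0 < n) (X : Ω → ℝ) (Y : Ω' → ℝ) (hX : Measurable X) (hY : Measurable Y)
    (hrel : ∀ t : ℝ, (ν {ω | - Y ω ≤ t}).toReal
      = 1 - ((μ {ω | t < - X ω}).toReal) ^ ((n : ℝ)⁻¹))
    (ε : ℝ) (hε : 0 < ε)
    (hint : Integrable (fun ω => (max 0 (- X ω)) ^ ((n : ℝ) + ε)) μ) :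
    Integrable (fun ω => max 0 (- Y ω)) ν :=
  integrability_of_higher_moment_general μ ν n hn X Y hY hrel ε hε hint
end

section
/- Let α ∈ (0,1), let n be a positive integer, and put F(u) = max(0, (u−α)/(1−α)) and Mₙ(u) = F(1 − (1−u)^{1/n}) for u ∈ [0,1]. Let X and Y be real random variables with E[max(0,−Y)] < ∞ whose distributions are related by P[−Y ≤ t] = 1 − (P[−X > t])^{1/n} for all t ∈ ℝ. Then ES_α(Y) = ∫_0^1 VaR_u(X) Mₙ(du), where the integral is with respect to the Lebesgue–Stieltjes measure of the distribution function Mₙ on [0,1]. (Thus X ↦ ES_α(Y) defines a spectral risk measure ES_α^{(n)} sensitive to the n-th moment of X.) -/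
open MeasureTheory Set

/-- Value-at-risk at level `α`: `VaR_α(X) = q_α(-X)`. -/
noncomputable def VaR {Ω : Type*} [MeasurableSpace Ω] (μ : Measure Ω)
    (X : Ω → ℝ) (α : ℝ) : ℝ :=
  quantile μ (fun ω => - X ω) α

open Filter Topology ProbabilityTheory

/-!
Write `Z = -Y`, `W = -X` and `q = q_α(Z)`. Expanding the definition,
`ES_α(Y) = q + (1-α)⁻¹ E[(Z-q)⁺]`. The relation between the laws of `Z` and `W` shows
`q = VaR_{u_α}(X)` for `u_α = 1 - (1-α)ⁿ`, the level where `Mₙ` leaves `0`, so `VaR_u(X) ≥ q`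
for `Mₙ`-almost every `u`. Both `E[(Z-q)⁺]` and `∫ (VaR_u(X) - q) Mₙ(du)` are then computed by
the layer-cake formula: the Galois connection `VaR_u(X) ≤ s ↔ u ≤ P[W ≤ s]` turns
`{u | q + t < VaR_u(X)}` into the interval `(P[W ≤ q + t], 1)`, whose `Mₙ`-mass is
`P[W > q + t]^{1/n} / (1-α) = P[Z > q + t] / (1-α)`.
-/

theorem StieltjesFunction.sInf_setOf_le_le_iff (f : StieltjesFunction ℝ) {p : ℝ}
    (hlo : ∃ x, f x < p) (hhi : ∃ x, p ≤ f x) (s : ℝ) :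
    sInf {x | p ≤ f x} ≤ s ↔ p ≤ f s := by
  have hbdd : BddBelow {x | p ≤ f x} := by
    obtain ⟨x, hx⟩ := hlo
    exact ⟨x, fun y hy => le_of_not_gt fun hyx => (hy.trans (f.mono hyx.le)).not_gt hx⟩
  have hmem : p ≤ f (sInf {x | p ≤ f x}) := by
    refine ge_of_tendsto
      ((f.right_continuous _).mono_left (nhdsWithin_mono _ Ioi_subset_Ici_self)) ?_
    filter_upwards [self_mem_nhdsWithin] with x hx
    obtain ⟨y, hy, hyx⟩ := (csInf_lt_iff hbdd hhi).mp hx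
    exact hy.trans (f.mono hyx.le)
  exact ⟨fun h => hmem.trans (f.mono h), fun h => csInf_le hbdd h⟩

section Quantile

variable {Ω : Type*} [MeasurableSpace Ω] {μ : Measure Ω} [IsProbabilityMeasure μ] {W : Ω → ℝ}

theorem quantile_le_iff (hW : Measurable W) {p : ℝ} (hp : p ∈ Ioo 0 1) (s : ℝ) :
    quantile μ W p ≤ s ↔ p ≤ μ.real {ω | W ω ≤ s} := by
  have := Measure.isProbabilityMeasure_map (μ := μ) hW.aemeasurable
  have hcdf (x : ℝ) : cdf (μ.map W) x = μ.real {ω | W ω ≤ x} := by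
    rw [cdf_eq_real, map_measureReal_apply hW measurableSet_Iic]; rfl
  have hset : {x | ENNReal.ofReal p ≤ μ {ω | W ω ≤ x}} = {x | p ≤ cdf (μ.map W) x} := by
    ext x
    rw [mem_ofPred_eq, mem_ofPred_eq, hcdf, measureReal_def,
      ENNReal.ofReal_le_iff_le_toReal (measure_ne_top _ _)]
  rw [quantile, hset, StieltjesFunction.sInf_setOf_le_le_iff, hcdf]
  · exact ((tendsto_cdf_atBot _).eventually (eventually_lt_nhds hp.1)).exists
  · exact ((tendsto_cdf_atTop _).eventually (eventually_ge_nhds hp.2)).exists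

theorem le_measureReal_quantile (hW : Measurable W) {p : ℝ} (hp : p ∈ Ioo 0 1) :
    p ≤ μ.real {ω | W ω ≤ quantile μ W p} :=
  (quantile_le_iff hW hp _).mp le_rfl

theorem monotoneOn_quantile (hW : Measurable W) : MonotoneOn (quantile μ W) (Ioo 0 1) :=
  fun _ hp _ hp' hpp' =>
    (quantile_le_iff hW hp _).mpr (hpp'.trans (le_measureReal_quantile hW hp'))

theorem setOf_lt_quantile_inter_Ioo (hW : Measurable W) (s : ℝ) :
    {p | s < quantile μ W p} ∩ Ioo 0 1 = Ioo (μ.real {ω | W ω ≤ s}) 1 := by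
  ext p
  simp only [mem_inter_iff, mem_ofPred_eq, mem_Ioo]
  constructor
  · rintro ⟨hs, hp⟩
    exact ⟨lt_of_not_ge fun h => hs.not_ge ((quantile_le_iff hW hp s).mpr h), hp.2⟩
  · rintro ⟨hsp, hp1⟩
    have hp : p ∈ Ioo 0 1 := ⟨measureReal_nonneg.trans_lt hsp, hp1⟩
    exact ⟨lt_of_not_ge fun h => hsp.not_ge ((quantile_le_iff hW hp s).mp h), hp⟩

end Quantile

theorem lintegral_ofReal_sub_eq_lintegral_meas_lt {α : Type*} [MeasurableSpace α]
    {μ : Measure α} {f : α → ℝ} (hf : AEMeasurable f μ) (c : ℝ) :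
    ∫⁻ x, ENNReal.ofReal (f x - c) ∂μ = ∫⁻ t in Ioi 0, μ {x | c + t < f x} := by
  have hmax (x : α) : ENNReal.ofReal (f x - c) = ENNReal.ofReal (max (f x - c) 0) := by
    rw [ENNReal.ofReal_max, ENNReal.ofReal_zero, max_zero]
  simp_rw [hmax]
  rw [lintegral_eq_lintegral_meas_lt μ (f := fun x => max (f x - c) 0)
    (ae_of_all _ fun _ => le_max_right _ _) ((hf.sub_const c).max aemeasurable_const)]
  refine setLIntegral_congr_fun measurableSet_Ioi fun t (ht : 0 < t) => ?_
  congr 1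
  ext x
  simp only [mem_ofPred_eq, lt_max_iff, ht.not_gt, or_false]
  constructor <;> intro h <;> linarith

theorem integrable_and_integral_eq_of_lintegral_ofReal_eq {β : Type*} [MeasurableSpace β]
    {μ : Measure β} {f : β → ℝ} (hf : AEMeasurable f μ) (hf0 : 0 ≤ᵐ[μ] f) {r : ℝ} (hr : 0 ≤ r)
    (h : ∫⁻ x, ENNReal.ofReal (f x) ∂μ = ENNReal.ofReal r) :
    Integrable f μ ∧ ∫ x, f x ∂μ = r := by
  refine ⟨⟨hf.aestronglyMeasurable,
    (hasFiniteIntegral_iff_ofReal hf0).mpr (h ▸ ENNReal.ofReal_lt_top)⟩, ?_⟩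
  rw [integral_eq_lintegral_of_nonneg_ae hf0 hf.aestronglyMeasurable, h, ENNReal.toReal_ofReal hr]

theorem MeasureTheory.Integrable.max_zero_sub {α : Type*} [MeasurableSpace α] {μ : Measure α}
    [IsFiniteMeasure μ] {f : α → ℝ} (h : Integrable (fun x => max 0 (f x)) μ)
    (hf : AEStronglyMeasurable f μ) (c : ℝ) : Integrable (fun x => max 0 (f x - c)) μ := by
  refine (h.add (integrable_const |c|)).mono'
    (aestronglyMeasurable_const.sup (hf.sub aestronglyMeasurable_const)) (ae_of_all _ fun x => ?_)
  rw [Real.norm_eq_abs, abs_of_nonneg (le_max_left _ _), Pi.add_apply]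
  exact max_le (by positivity) (by linarith [le_max_right 0 (f x), neg_abs_le c])

theorem ES_eq_quantile_add_integral {Ω : Type*} [MeasurableSpace Ω] {ν : Measure Ω}
    [IsProbabilityMeasure ν] {Y : Ω → ℝ} (hY : Measurable Y)
    (hint : Integrable (fun ω => max 0 (-Y ω)) ν) {α : ℝ} (hα : α ≠ 1) :
    ES ν Y α = quantile ν (fun ω => -Y ω) α
      + (1 - α)⁻¹ * ∫ ω, max 0 (-Y ω - quantile ν (fun ω => -Y ω) α) ∂ν := by
  set q := quantile ν (fun ω => -Y ω) α
  set A := {ω | q ≤ -Y ω}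
  have hA : MeasurableSet A := measurableSet_le measurable_const hY.neg
  have hYA : IntegrableOn Y A ν := by
    refine ((hint.max_zero_sub hY.neg.aestronglyMeasurable q).neg.sub
      (integrable_const q)).integrableOn.congr_fun (fun ω (hω : q ≤ -Y ω) => ?_) hA
    simp only [Pi.sub_apply, Pi.neg_apply, max_eq_right (sub_nonneg.mpr hω)]
    ring
  have hE : ∫ ω, max 0 (-Y ω - q) ∂ν = -(∫ ω in A, Y ω ∂ν) - q * ν.real A := by
    rw [← setIntegral_eq_integral_of_forall_compl_eq_zero (s := A) fun ω hω =>
        max_eq_left (by simp only [A, mem_ofPred_eq, not_le] at hω; linarith),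
      setIntegral_congr_fun hA fun ω (hω : q ≤ -Y ω) => max_eq_right (by linarith),
      integral_sub (f := fun ω => -Y ω) hYA.neg (integrableOn_const (measure_ne_top _ _)),
      integral_neg, setIntegral_const, smul_eq_mul, mul_comm]
  have hcompl : ν.real {ω | -Y ω < q} = 1 - ν.real A := by
    rw [← probReal_compl_eq_one_sub hA]
    congr 1
    ext ω
    simp [A]
  rw [ES, ← measureReal_def, hcompl, hE]
  have : 1 - α ≠ 0 := sub_ne_zero.mpr hα.symm
  field_simp
  ring

/-- `Mₙ`, extended to a distribution function on `ℝ`. -/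
noncomputable def esnDistortion (α : ℝ) (n : ℕ) (u : ℝ) : ℝ :=
  if u < 0 then 0 else if u ≤ 1 then max 0 ((1 - (1 - u) ^ ((n : ℝ)⁻¹) - α) / (1 - α)) else 1

theorem rpow_natCast_inv_le_iff {x y : ℝ} (hx : 0 ≤ x) (hy : 0 ≤ y) {n : ℕ} (hn : n ≠ 0) :
    x ^ (n⁻¹ : ℝ) ≤ y ↔ x ≤ y ^ n := by
  rw [← Real.rpow_natCast y n]
  exact Real.rpow_inv_le_iff_of_pos hx hy (by positivity)

section esnDistortion

variable {α : ℝ} {n : ℕ}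

theorem one_sub_pow_mem_Ioo (hα : α ∈ Ioo 0 1) (hn : n ≠ 0) : 1 - (1 - α) ^ n ∈ Ioo 0 1 := by
  have h0 : 0 < 1 - α := by linarith [hα.2]
  constructor
  · linarith [pow_lt_one₀ h0.le (by linarith [hα.1]) hn]
  · linarith [pow_pos h0 n]

theorem esnDistortion_zero (hα : α ∈ Ioo 0 1) : esnDistortion α n 0 = 0 := by
  rw [esnDistortion, if_neg (lt_irrefl 0), if_pos zero_le_one, sub_zero, Real.one_rpow,
    max_eq_left (div_nonpos_of_nonpos_of_nonneg (by linarith [hα.1]) (by linarith [hα.2]))]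

theorem esnDistortion_of_mem_Icc (hα : α ∈ Ioo 0 1) (hn : n ≠ 0) {v : ℝ}
    (hv : v ∈ Icc (1 - (1 - α) ^ n) 1) :
    esnDistortion α n v = (1 - (1 - v) ^ ((n : ℝ)⁻¹) - α) / (1 - α) := by
  have hα' : 0 < 1 - α := by linarith [hα.2]
  have hv0 : 0 ≤ v := (one_sub_pow_mem_Ioo hα hn).1.le.trans hv.1
  rw [esnDistortion, if_neg hv0.not_gt, if_pos hv.2, max_eq_right]
  refine div_nonneg ?_ hα'.le
  have := (rpow_natCast_inv_le_iff (x := 1 - v) (by linarith [hv.2]) hα'.le hn).mpr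
    (by linarith [hv.1])
  linarith

theorem esnDistortion_one_sub_pow (hα : α ∈ Ioo 0 1) (hn : n ≠ 0) :
    esnDistortion α n (1 - (1 - α) ^ n) = 0 := by
  rw [esnDistortion_of_mem_Icc hα hn ⟨le_rfl, (one_sub_pow_mem_Ioo hα hn).2.le⟩,
    sub_sub_cancel, Real.pow_rpow_inv_natCast (by linarith [hα.2]) hn]
  ring

theorem tendsto_esnDistortion_one (hα : α ∈ Ioo 0 1) (hn : n ≠ 0) :
    Tendsto (esnDistortion α n) (𝓝[<] 1) (𝓝 1) := by
  have hα' : 1 - α ≠ 0 := by linarith [hα.2]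
  have hcont : ContinuousAt (fun u : ℝ => (1 - (1 - u) ^ ((n : ℝ)⁻¹) - α) / (1 - α)) 1 := by
    refine ((continuousAt_const.sub ?_).sub continuousAt_const).div_const _
    exact (Real.continuousAt_rpow_const _ _ (Or.inr (by positivity))).comp (by fun_prop)
  have hval : (1 - (1 - 1 : ℝ) ^ ((n : ℝ)⁻¹) - α) / (1 - α) = 1 := by
    rw [sub_self, Real.zero_rpow (by positivity), sub_zero, div_self hα']
  refine (hval ▸ hcont.tendsto.mono_left nhdsWithin_le_nhds).congr' ?_
  filter_upwards [Ioo_mem_nhdsLT (one_sub_pow_mem_Ioo hα hn).2] with u hu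
  exact (esnDistortion_of_mem_Icc hα hn ⟨hu.1.le, hu.2.le⟩).symm

variable {M : StieltjesFunction ℝ}

theorem measure_Ioo_one_of_eq_esnDistortion (hα : α ∈ Ioo 0 1) (hn : n ≠ 0)
    (hM : ⇑M = esnDistortion α n) (v : ℝ) :
    M.measure (Ioo v 1) = ENNReal.ofReal (1 - esnDistortion α n v) := by
  rw [StieltjesFunction.measure_Ioo, hM, leftLim_eq_of_tendsto (tendsto_esnDistortion_one hα hn)]

end esnDistortion

section Distortion

variable {Ω Ω' : Type*} [MeasurableSpace Ω] [MeasurableSpace Ω'] {μ : Measure Ω} {ν : Measure Ω'}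
  {X : Ω → ℝ} {Y : Ω' → ℝ} {α : ℝ} {n : ℕ}

theorem measureReal_le_eq_one_sub [IsProbabilityMeasure μ] {W : Ω → ℝ} (hW : Measurable W)
    (s : ℝ) :
    μ.real {ω | W ω ≤ s} = 1 - μ.real {ω | s < W ω} := by
  rw [← probReal_compl_eq_one_sub (measurableSet_lt measurable_const hW)]
  congr 1
  ext ω
  simp

theorem quantile_neg_eq_VaR_one_sub_pow [IsProbabilityMeasure μ] [IsProbabilityMeasure ν]
    (hX : Measurable X) (hY : Measurable Y) (hα : α ∈ Ioo 0 1) (hn : n ≠ 0)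
    (hrel : ∀ t : ℝ, (ν {ω | - Y ω ≤ t}).toReal
      = 1 - ((μ {ω | t < - X ω}).toReal) ^ ((n : ℝ)⁻¹)) :
    quantile ν (fun ω => -Y ω) α = VaR μ X (1 - (1 - α) ^ n) := by
  refine eq_of_forall_ge_iff fun s => ?_
  rw [VaR, quantile_le_iff (W := fun ω => -Y ω) hY.neg hα,
    quantile_le_iff (W := fun ω => -X ω) hX.neg (one_sub_pow_mem_Ioo hα hn),
    measureReal_def, hrel s, measureReal_le_eq_one_sub (W := fun ω => -X ω) hX.neg,
    ← measureReal_def, le_sub_comm,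
    rpow_natCast_inv_le_iff measureReal_nonneg (by linarith [hα.2]) hn, sub_le_sub_iff_left]

theorem measure_lt_neg_eq_ofReal_rpow [IsProbabilityMeasure ν] (hY : Measurable Y)
    (hrel : ∀ t : ℝ, (ν {ω | - Y ω ≤ t}).toReal
      = 1 - ((μ {ω | t < - X ω}).toReal) ^ ((n : ℝ)⁻¹)) (s : ℝ) :
    ν {ω | s < -Y ω} = ENNReal.ofReal (μ.real {ω | s < -X ω} ^ ((n : ℝ)⁻¹)) := by
  have h := measureReal_le_eq_one_sub (μ := ν) (W := fun ω => -Y ω) hY.neg s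
  rw [measureReal_def, hrel s, ← measureReal_def] at h
  rw [← ofReal_measureReal]
  congr 1
  linarith

variable {M : StieltjesFunction ℝ}

theorem restrict_measure_setOf_lt_VaR [IsProbabilityMeasure μ] (hX : Measurable X)
    (hα : α ∈ Ioo 0 1) (hn : n ≠ 0) (hM : ⇑M = esnDistortion α n) {s : ℝ}
    (hs : VaR μ X (1 - (1 - α) ^ n) ≤ s) :
    M.measure.restrict (Ioo 0 1) {u | s < VaR μ X u}
      = ENNReal.ofReal (μ.real {ω | s < -X ω} ^ ((n : ℝ)⁻¹) / (1 - α)) := by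
  have hv : μ.real {ω | -X ω ≤ s} ∈ Icc (1 - (1 - α) ^ n) 1 :=
    ⟨(quantile_le_iff hX.neg (one_sub_pow_mem_Ioo hα hn) s).mp hs, measureReal_le_one⟩
  rw [Measure.restrict_apply' measurableSet_Ioo]
  unfold VaR
  rw [setOf_lt_quantile_inter_Ioo (W := fun ω => -X ω) hX.neg s,
    measure_Ioo_one_of_eq_esnDistortion hα hn hM, esnDistortion_of_mem_Icc hα hn hv,
    measureReal_le_eq_one_sub (W := fun ω => -X ω) hX.neg, sub_sub_cancel]
  have : 1 - α ≠ 0 := by linarith [hα.2]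
  congr 1
  field_simp
  ring

theorem ae_restrict_Ioo_VaR_one_sub_pow_le [IsProbabilityMeasure μ] (hX : Measurable X)
    (hα : α ∈ Ioo 0 1) (hn : n ≠ 0) (hM : ⇑M = esnDistortion α n) :
    ∀ᵐ u ∂M.measure.restrict (Ioo 0 1), VaR μ X (1 - (1 - α) ^ n) ≤ VaR μ X u := by
  have hnull : M.measure (Ioc 0 (1 - (1 - α) ^ n)) = 0 := by
    rw [StieltjesFunction.measure_Ioc, hM, esnDistortion_one_sub_pow hα hn,
      esnDistortion_zero hα, sub_zero, ENNReal.ofReal_zero]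
  filter_upwards [ae_restrict_mem measurableSet_Ioo,
    ae_restrict_of_ae (measure_eq_zero_iff_ae_notMem.mp hnull)] with u hu hu'
  have hle : 1 - (1 - α) ^ n ≤ u := le_of_not_ge fun h => hu' ⟨hu.1, h⟩
  exact monotoneOn_quantile (μ := μ) hX.neg (one_sub_pow_mem_Ioo hα hn) hu hle

theorem integral_VaR_sub_VaR_one_sub_pow [IsProbabilityMeasure μ] [IsProbabilityMeasure ν]
    (hX : Measurable X) (hY : Measurable Y) (hα : α ∈ Ioo 0 1) (hn : n ≠ 0)
    (hM : ⇑M = esnDistortion α n)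
    (hrel : ∀ t : ℝ, (ν {ω | - Y ω ≤ t}).toReal
      = 1 - ((μ {ω | t < - X ω}).toReal) ^ ((n : ℝ)⁻¹))
    (hint : Integrable (fun ω => max 0 (-Y ω - VaR μ X (1 - (1 - α) ^ n))) ν) :
    Integrable (fun u => VaR μ X u - VaR μ X (1 - (1 - α) ^ n)) (M.measure.restrict (Ioo 0 1))
      ∧ ∫ u in Ioo 0 1, (VaR μ X u - VaR μ X (1 - (1 - α) ^ n)) ∂M.measure
        = (1 - α)⁻¹ * ∫ ω, max 0 (-Y ω - VaR μ X (1 - (1 - α) ^ n)) ∂ν := by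
  set q := VaR μ X (1 - (1 - α) ^ n)
  have hα' : 0 < 1 - α := by linarith [hα.2]
  have hE :
      ∫⁻ ω, ENNReal.ofReal (-Y ω - q) ∂ν = ENNReal.ofReal (∫ ω, max 0 (-Y ω - q) ∂ν) := by
    rw [ofReal_integral_eq_lintegral_ofReal hint (ae_of_all _ fun _ => le_max_left _ _)]
    simp only [ENNReal.ofReal_max, ENNReal.ofReal_zero, zero_max]
  have hVaR : AEMeasurable (fun u => VaR μ X u) (M.measure.restrict (Ioo 0 1)) :=
    aemeasurable_restrict_of_monotoneOn measurableSet_Ioo (monotoneOn_quantile (μ := μ) hX.neg)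
  rw [mul_comm, ← div_eq_mul_inv]
  refine integrable_and_integral_eq_of_lintegral_ofReal_eq (hVaR.sub_const q) ?_
    (div_nonneg (integral_nonneg fun _ => le_max_left _ _) hα'.le) ?_
  · filter_upwards [ae_restrict_Ioo_VaR_one_sub_pow_le (μ := μ) hX hα hn hM] with u hu
    exact sub_nonneg.mpr hu
  rw [lintegral_ofReal_sub_eq_lintegral_meas_lt hVaR, ENNReal.ofReal_div_of_pos hα', ← hE,
    lintegral_ofReal_sub_eq_lintegral_meas_lt (f := fun ω => -Y ω) hY.neg.aemeasurable,
    div_eq_mul_inv,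
    ← lintegral_mul_const' _ _ (ENNReal.inv_ne_top.mpr (ENNReal.ofReal_pos.mpr hα').ne')]
  refine setLIntegral_congr_fun measurableSet_Ioi fun t (ht : 0 < t) => ?_
  rw [restrict_measure_setOf_lt_VaR hX hα hn hM (by linarith),
    measure_lt_neg_eq_ofReal_rpow hY hrel, ENNReal.ofReal_div_of_pos hα', div_eq_mul_inv]

end Distortion

/-- For `Mₙ(u) = F(1 - (1-u)^{1/n})` with `F(u) = max(0, (u-α)/(1-α))`, and `X`, `Y` related
by `P[-Y ≤ t] = 1 - (P[-X > t])^{1/n}`, one has `ES_α(Y) = ∫_0^1 VaR_u(X) Mₙ(du)`;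
thus `X ↦ ES_α(Y)` defines a spectral risk measure sensitive to the `n`-th moment of `X`. -/
theorem es_n_eq_stieltjes_integral_var {Ω Ω' : Type*}
    [MeasurableSpace Ω] [MeasurableSpace Ω']
    (μ : Measure Ω) (ν : Measure Ω') [IsProbabilityMeasure μ] [IsProbabilityMeasure ν]
    (α : ℝ) (hα : α ∈ Set.Ioo (0 : ℝ) 1) (n : ℕ) (hn : 0 < n)
    (M : StieltjesFunction ℝ)
    (hM : ∀ u : ℝ, M u = if u < 0 then 0 else if u ≤ 1 then
      max 0 ((1 - (1 - u) ^ ((n : ℝ)⁻¹) - α) / (1 - α)) else 1)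
    (X : Ω → ℝ) (Y : Ω' → ℝ) (hX : Measurable X) (hY : Measurable Y)
    (hrel : ∀ t : ℝ, (ν {ω | - Y ω ≤ t}).toReal
      = 1 - ((μ {ω | t < - X ω}).toReal) ^ ((n : ℝ)⁻¹))
    (hint : Integrable (fun ω => max 0 (- Y ω)) ν) :
    ES ν Y α = ∫ u in Set.Ioo (0 : ℝ) 1, VaR μ X u ∂M.measure := by
  have hM' : ⇑M = esnDistortion α n := funext hM
  have : IsProbabilityMeasure (M.measure.restrict (Ioo 0 1)) := ⟨by
    rw [Measure.restrict_apply_univ, measure_Ioo_one_of_eq_esnDistortion hα hn.ne' hM',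
      esnDistortion_zero hα, sub_zero, ENNReal.ofReal_one]⟩
  rw [ES_eq_quantile_add_integral hY hint hα.2.ne,
    quantile_neg_eq_VaR_one_sub_pow hX hY hα hn.ne' hrel]
  set q := VaR μ X (1 - (1 - α) ^ n)
  obtain ⟨hVaR_int, hVaR_eq⟩ := integral_VaR_sub_VaR_one_sub_pow hX hY hα hn.ne' hM' hrel
    (hint.max_zero_sub hY.neg.aestronglyMeasurable q)
  calc q + (1 - α)⁻¹ * ∫ ω, max 0 (-Y ω - q) ∂ν
      = ∫ u in Ioo 0 1, (VaR μ X u - q + q) ∂M.measure := by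
        rw [integral_add hVaR_int (integrable_const q), hVaR_eq, integral_const, probReal_univ,
          one_smul, add_comm]
    _ = ∫ u in Ioo 0 1, VaR μ X u ∂M.measure := by simp_rw [sub_add_cancel]
end

section
/- Let X be a real random variable, f : ℝ → [0,∞) a Borel measurable function, and α ∈ (0,1). Then ∫_0^α f(q_u(X)) du = E[f(X)·1{X ≤ q_α(X)}] + f(q_α(X))·(α − P[X ≤ q_α(X)]), where the left-hand side is the Lebesgue integral over u ∈ (0,α); if either side is infinite, so is the other. -/
/-! The quantile function `u ↦ q_u(X)` is the generalized inverse of the distribution function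
`F` of `X`: for `u ∈ (0,1)`, `q_u ≤ x ↔ u ≤ F x`, by right-continuity of `F`. Hence it pushes
Lebesgue measure on `(0,1)` forward to the law of `X`, and `{u ∈ (0,1) | q_u ≤ q_α}` is
`(0, F q_α]` up to a null set, so `E[f(X); X ≤ q_α] = ∫_0^{F q_α} f(q_u) du`. On `(α, F q_α)`
the quantile is constant, equal to `q_α`, which produces the correction term. -/

open MeasureTheory Set

open Filter Topology ProbabilityTheory
open scoped ENNReal

namespace ProbabilityTheory

noncomputable def cdfInv (ν : Measure ℝ) (u : ℝ) : ℝ := sInf {x | u ≤ cdf ν x}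

variable {ν : Measure ℝ} {u : ℝ}

lemma bddBelow_setOf_le_cdf (hu : 0 < u) : BddBelow {x | u ≤ cdf ν x} := by
  obtain ⟨a, ha⟩ := eventually_atBot.1 ((tendsto_cdf_atBot ν).eventually (eventually_lt_nhds hu))
  exact ⟨a, fun x hx => le_of_not_gt fun hxa => (ha x hxa.le).not_ge hx⟩

lemma nonempty_setOf_le_cdf (hu : u < 1) : {x | u ≤ cdf ν x}.Nonempty :=
  ((tendsto_cdf_atTop ν).eventually (eventually_gt_nhds hu)).exists.imp fun _ => le_of_lt

lemma le_cdf_cdfInv (hu : u ∈ Ioo 0 1) : u ≤ cdf ν (cdfInv ν u) := by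
  have h_above : ∀ᶠ x in 𝓝[>] (cdfInv ν u), u ≤ cdf ν x := by
    filter_upwards [self_mem_nhdsWithin] with x hx
    obtain ⟨y, hy, hyx⟩ :=
      (csInf_lt_iff (bddBelow_setOf_le_cdf hu.1) (nonempty_setOf_le_cdf hu.2)).1 hx
    exact hy.trans (monotone_cdf ν hyx.le)
  exact ge_of_tendsto (((cdf ν).right_continuous _).mono Ioi_subset_Ici_self) h_above

lemma cdfInv_le_iff (hu : u ∈ Ioo 0 1) {x : ℝ} : cdfInv ν u ≤ x ↔ u ≤ cdf ν x :=
  ⟨fun h => (le_cdf_cdfInv hu).trans (monotone_cdf ν h),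
    fun h => csInf_le (bddBelow_setOf_le_cdf hu.1) h⟩

lemma monotoneOn_cdfInv : MonotoneOn (cdfInv ν) (Ioo 0 1) := fun _ hu _ hv huv =>
  (cdfInv_le_iff hu).2 (huv.trans (le_cdf_cdfInv hv))

lemma cdfInv_eq_of_mem_Ioo {α : ℝ} (hα : α ∈ Ioo 0 1) (hu : u ∈ Ioo α (cdf ν (cdfInv ν α))) :
    cdfInv ν u = cdfInv ν α := by
  have hu01 : u ∈ Ioo 0 1 := ⟨hα.1.trans hu.1, hu.2.trans_le (cdf_le_one ν _)⟩
  exact le_antisymm ((cdfInv_le_iff hu01).2 hu.2.le) (monotoneOn_cdfInv hα hu01 hu.1.le)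

lemma restrict_restrict_preimage_cdfInv_Iic (x : ℝ) :
    (volume.restrict (Ioo 0 1)).restrict (cdfInv ν ⁻¹' Iic x)
      = volume.restrict (Ioc 0 (cdf ν x)) := by
  rw [Measure.restrict_restrict' measurableSet_Ioo]
  refine Measure.restrict_congr_set ?_
  have h_eq : cdfInv ν ⁻¹' Iic x ∩ Ioo 0 1 = Ioc 0 (cdf ν x) ∩ Ioo 0 1 := by
    ext u
    constructor
    · rintro ⟨hx, hu⟩
      exact ⟨⟨hu.1, (cdfInv_le_iff hu).1 hx⟩, hu⟩
    · rintro ⟨⟨-, hx⟩, hu⟩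
      exact ⟨(cdfInv_le_iff hu).2 hx, hu⟩
  rw [h_eq]
  -- between `Ioo 0 (cdf ν x)` and `Ioc 0 (cdf ν x)` since `cdf ν x ≤ 1`
  refine EventuallyLE.antisymm ?_ ?_
  · exact inter_subset_left.eventuallyLE
  · refine Ioo_ae_eq_Ioc.symm.le.trans (LE.le.eventuallyLE ?_)
    exact fun u hu => ⟨Ioo_subset_Ioc_self hu, hu.1, hu.2.trans_le (cdf_le_one ν x)⟩

lemma aemeasurable_cdfInv : AEMeasurable (cdfInv ν) (volume.restrict (Ioo 0 1)) :=
  aemeasurable_restrict_of_monotoneOn measurableSet_Ioo monotoneOn_cdfInv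

variable [IsProbabilityMeasure ν]

lemma map_cdfInv : (volume.restrict (Ioo 0 1)).map (cdfInv ν) = ν := by
  refine (Measure.ext_of_Iic ν _ fun x => ?_).symm
  rw [Measure.map_apply_of_aemeasurable aemeasurable_cdfInv measurableSet_Iic, ← ofReal_cdf,
    ← Measure.restrict_apply_univ, restrict_restrict_preimage_cdfInv_Iic,
    Measure.restrict_apply_univ, Real.volume_Ioc, sub_zero]

lemma setLIntegral_Iic_eq_setLIntegral_cdfInv {f : ℝ → ℝ≥0∞} (hf : Measurable f) (x : ℝ) :
    ∫⁻ y in Iic x, f y ∂ν = ∫⁻ u in Ioc 0 (cdf ν x), f (cdfInv ν u) := by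
  conv_lhs => rw [← map_cdfInv (ν := ν), Measure.restrict_map_of_aemeasurable aemeasurable_cdfInv
    measurableSet_Iic, lintegral_map' hf.aemeasurable aemeasurable_cdfInv.restrict]
  rw [restrict_restrict_preimage_cdfInv_Iic]

theorem setLIntegral_Iic_cdfInv {f : ℝ → ℝ≥0∞} (hf : Measurable f) {α : ℝ} (hα : α ∈ Ioo 0 1) :
    (∫⁻ u in Ioo 0 α, f (cdfInv ν u))
        + f (cdfInv ν α) * (ENNReal.ofReal (cdf ν (cdfInv ν α)) - ENNReal.ofReal α)
      = ∫⁻ x in Iic (cdfInv ν α), f x ∂ν := by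
  set t := cdf ν (cdfInv ν α)
  have h_const : ∫⁻ u in Ioc α t, f (cdfInv ν u)
      = f (cdfInv ν α) * (ENNReal.ofReal t - ENNReal.ofReal α) := by
    rw [← Measure.restrict_congr_set Ioo_ae_eq_Ioc,
      setLIntegral_congr_fun measurableSet_Ioo fun u hu => by rw [cdfInv_eq_of_mem_Ioo hα hu],
      setLIntegral_const, Real.volume_Ioo, ENNReal.ofReal_sub _ hα.1.le]
  rw [setLIntegral_Iic_eq_setLIntegral_cdfInv hf, ← Ioc_union_Ioc_eq_Ioc hα.1.le (le_cdf_cdfInv hα),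
    lintegral_union measurableSet_Ioc (Ioc_disjoint_Ioc_of_le le_rfl), h_const,
    Measure.restrict_congr_set Ioo_ae_eq_Ioc]

end ProbabilityTheory

lemma measure_le_eq_ofReal_cdf_map {Ω : Type*} [MeasurableSpace Ω] {μ : Measure Ω}
    [IsProbabilityMeasure μ] {X : Ω → ℝ} (hX : AEMeasurable X μ) (x : ℝ) :
    μ {ω | X ω ≤ x} = ENNReal.ofReal (cdf (μ.map X) x) := by
  have := Measure.isProbabilityMeasure_map (μ := μ) hX
  rw [ofReal_cdf, Measure.map_apply_of_aemeasurable hX measurableSet_Iic]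
  rfl

lemma quantile_eq_cdfInv_map {Ω : Type*} [MeasurableSpace Ω] {μ : Measure Ω}
    [IsProbabilityMeasure μ] {X : Ω → ℝ} (hX : AEMeasurable X μ) :
    quantile μ X = cdfInv (μ.map X) := by
  ext u
  simp only [quantile, cdfInv, measure_le_eq_ofReal_cdf_map hX,
    ENNReal.ofReal_le_ofReal_iff (cdf_nonneg _ _)]

/-- Stated in `ℝ≥0∞`, with the non-positive correction term moved to the left-hand side, so that
if either side is infinite, so is the other. -/
theorem integral_quantile_eq_tail_expectation_general {Ω : Type*} [MeasurableSpace Ω]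
    (μ : Measure Ω) [IsProbabilityMeasure μ] (X : Ω → ℝ) (hX : Measurable X)
    (f : ℝ → ℝ) (hf : Measurable f)
    (α : ℝ) (hα : α ∈ Set.Ioo (0 : ℝ) 1) :
    (∫⁻ u in Set.Ioo (0 : ℝ) α, ENNReal.ofReal (f (quantile μ X u)))
        + ENNReal.ofReal (f (quantile μ X α))
          * (μ {ω | X ω ≤ quantile μ X α} - ENNReal.ofReal α)
      = ∫⁻ ω in {ω | X ω ≤ quantile μ X α}, ENNReal.ofReal (f (X ω)) ∂μ := by
  have := Measure.isProbabilityMeasure_map (μ := μ) hX.aemeasurable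
  rw [measure_le_eq_ofReal_cdf_map hX.aemeasurable, quantile_eq_cdfInv_map hX.aemeasurable,
    setLIntegral_Iic_cdfInv hf.ennreal_ofReal hα]
  exact setLIntegral_map measurableSet_Iic hf.ennreal_ofReal hX

/-- `∫_0^α f(q_u(X)) du = E[f(X)·1{X ≤ q_α(X)}] + f(q_α(X))·(α - P[X ≤ q_α(X)])` for
non-negative Borel `f`, stated in `ℝ≥0∞` (with the non-positive correction term moved to
the left-hand side) so that if either side is infinite, so is the other. -/
theorem integral_quantile_eq_tail_expectation {Ω : Type*} [MeasurableSpace Ω]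
    (μ : Measure Ω) [IsProbabilityMeasure μ] (X : Ω → ℝ) (hX : Measurable X)
    (f : ℝ → ℝ) (hf : Measurable f) (hf0 : ∀ x, 0 ≤ f x)
    (α : ℝ) (hα : α ∈ Set.Ioo (0 : ℝ) 1) :
    (∫⁻ u in Set.Ioo (0 : ℝ) α, ENNReal.ofReal (f (quantile μ X u)))
        + ENNReal.ofReal (f (quantile μ X α))
          * (μ {ω | X ω ≤ quantile μ X α} - ENNReal.ofReal α)
      = ∫⁻ ω in {ω | X ω ≤ quantile μ X α}, ENNReal.ofReal (f (X ω)) ∂μ :=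
  integral_quantile_eq_tail_expectation_general μ X hX f hf α hα
end

section
/- Let X be a real random variable, f : ℝ → [0,∞) a Borel measurable function, and α ∈ (0,1). Then ∫_0^α f(q_u(X)) du = E[f(X)·1{X < q_α(X)}] + f(q_α(X))·(α − P[X < q_α(X)]), where the left-hand side is the Lebesgue integral over u ∈ (0,α); if either side is infinite, so is the other. -/
open MeasureTheory Set

/-! For `u ∈ (0, 1)` the quantile is the generalized inverse of the distribution function `F`
of `X`: by right continuity of `F`, `q_u ≤ x ↔ u ≤ F x`. Hence the image of Lebesgue measure on
`(0, α)` under `u ↦ q_u` gives `(-∞, t]` the mass `min α (F t)`, i.e. it is the law of `X`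
restricted to `{X < q_α}` plus an atom of mass `α - P[X < q_α]` at `q_α`; integrate `f`
against it. -/

open Filter Topology ProbabilityTheory
open scoped ENNReal

theorem StieltjesFunction.sInf_setOf_le_le_iff_s17 (F : StieltjesFunction ℝ) {u x : ℝ}
    (hlow : ∃ y, F y < u) (hup : ∃ y, u ≤ F y) :
    sInf {y | u ≤ F y} ≤ x ↔ u ≤ F x := by
  set s := sInf {y | u ≤ F y}
  have hbdd : BddBelow {y | u ≤ F y} := by
    obtain ⟨y₀, hy₀⟩ := hlow
    exact ⟨y₀, fun y hy => (F.mono.reflect_lt (hy₀.trans_le hy)).le⟩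
  refine ⟨fun hx => ?_, fun hx => csInf_le hbdd hx⟩
  have hs : u ≤ F s := by
    refine ge_of_tendsto ((F.right_continuous s).mono Ioi_subset_Ici_self)
      (eventually_nhdsWithin_of_forall fun y hy => ?_)
    obtain ⟨z, hz, hzy⟩ := exists_lt_of_csInf_lt hup hy
    exact le_trans hz (F.mono hzy.le)
  exact hs.trans (F.mono hx)

theorem quantile_map {Ω : Type*} [MeasurableSpace Ω] (μ : Measure Ω) {X : Ω → ℝ}
    (hX : Measurable X) (u : ℝ) : quantile (μ.map X) id u = quantile μ X u := by
  unfold quantile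
  congr! 4 with x
  exact Measure.map_apply hX measurableSet_Iic

namespace ProbabilityTheory

variable {ν : Measure ℝ} [IsProbabilityMeasure ν]

theorem quantile_id_eq_sInf_cdf (u : ℝ) : quantile ν id u = sInf {x | u ≤ cdf ν x} := by
  unfold quantile
  congr 1; ext x
  change ENNReal.ofReal u ≤ ν (Iic x) ↔ u ≤ cdf ν x
  rw [← ofReal_cdf, ENNReal.ofReal_le_ofReal_iff (cdf_nonneg ν x)]

theorem quantile_id_le_iff {u : ℝ} (hu : u ∈ Ioo 0 1) (x : ℝ) :
    quantile ν id u ≤ x ↔ u ≤ cdf ν x := by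
  rw [quantile_id_eq_sInf_cdf]
  exact (cdf ν).sInf_setOf_le_le_iff_s17 ((tendsto_cdf_atBot ν).eventually_lt_const hu.1).exists
    ((tendsto_cdf_atTop ν).eventually_const_le hu.2).exists

theorem lt_quantile_id_iff {u : ℝ} (hu : u ∈ Ioo 0 1) (x : ℝ) :
    x < quantile ν id u ↔ cdf ν x < u := by
  simpa only [not_le] using (quantile_id_le_iff hu x).not

theorem monotoneOn_quantile_id : MonotoneOn (quantile ν id) (Ioo 0 1) :=
  fun _ hu _ hv huv => (quantile_id_le_iff hu _).2 <|
    huv.trans <| (quantile_id_le_iff hv _).1 le_rfl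

theorem measure_Iio_quantile_id_le {α : ℝ} (hα : α ∈ Ioo 0 1) :
    ν (Iio (quantile ν id α)) ≤ ENNReal.ofReal α := by
  have hIio := (cdf ν).measure_Iio (tendsto_cdf_atBot ν) (quantile ν id α)
  rw [measure_cdf, sub_zero] at hIio
  rw [hIio]
  exact ENNReal.ofReal_le_ofReal <| le_of_tendsto ((cdf ν).mono.tendsto_leftLim _)
    (eventually_nhdsWithin_of_forall fun y hy => ((lt_quantile_id_iff hα y).1 hy).le)

theorem aemeasurable_quantile_id {α : ℝ} (hα : α ∈ Ioo 0 1) :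
    AEMeasurable (quantile ν id) (volume.restrict (Ioo 0 α)) :=
  aemeasurable_restrict_of_monotoneOn measurableSet_Ioo <|
    monotoneOn_quantile_id.mono <| Ioo_subset_Ioo_right hα.2.le

theorem map_volume_restrict_Ioo_quantile_id {α : ℝ} (hα : α ∈ Ioo 0 1) :
    (volume.restrict (Ioo 0 α)).map (quantile ν id) =
      ν.restrict (Iio (quantile ν id α)) +
        (ENNReal.ofReal α - ν (Iio (quantile ν id α))) • Measure.dirac (quantile ν id α) := by
  set q := quantile ν id α
  refine Measure.ext_of_Iic _ _ fun t => ?_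
  rw [Measure.map_apply_of_aemeasurable (aemeasurable_quantile_id hα) measurableSet_Iic,
    Measure.restrict_apply' measurableSet_Ioo, Measure.add_apply,
    Measure.restrict_apply measurableSet_Iic, Measure.smul_apply,
    Measure.dirac_apply' _ measurableSet_Iic, smul_eq_mul]
  have hpre : quantile ν id ⁻¹' Iic t ∩ Ioo 0 α = Ioo 0 α ∩ Iic (cdf ν t) := by
    ext u
    simp only [mem_inter_iff, mem_preimage, mem_Iic, and_comm (a := _ ≤ t)]
    exact and_congr_right fun hu => quantile_id_le_iff ⟨hu.1, hu.2.trans hα.2⟩ t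
  rw [hpre]
  rcases lt_or_ge t q with ht | ht
  · have hcdf : cdf ν t < α := (lt_quantile_id_iff hα t).1 ht
    have hIoc : Ioo 0 α ∩ Iic (cdf ν t) = Ioc 0 (cdf ν t) := by
      ext u
      simp only [mem_inter_iff, mem_Ioo, mem_Iic, mem_Ioc]
      exact ⟨fun ⟨⟨h0, _⟩, h⟩ => ⟨h0, h⟩, fun ⟨h0, h⟩ => ⟨⟨h0, h.trans_lt hcdf⟩, h⟩⟩
    rw [hIoc, Real.volume_Ioc, sub_zero, ofReal_cdf, inter_eq_left.2 (Iic_subset_Iio.2 ht),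
      indicator_of_notMem (show q ∉ Iic t from not_le.2 ht), mul_zero, add_zero]
  · have hcdf : α ≤ cdf ν t := (quantile_id_le_iff hα t).1 ht
    rw [inter_eq_left.2 fun u hu => hu.2.le.trans hcdf, Real.volume_Ioo, sub_zero,
      inter_eq_right.2 (Iio_subset_Iic_iff.2 ht), indicator_of_mem (mem_Iic.2 ht), Pi.one_apply,
      mul_one, add_tsub_cancel_of_le (measure_Iio_quantile_id_le hα)]

theorem setLIntegral_Ioo_comp_quantile_id {α : ℝ} (hα : α ∈ Ioo 0 1) {g : ℝ → ℝ≥0∞}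
    (hg : Measurable g) :
    ∫⁻ u in Ioo 0 α, g (quantile ν id u) =
      ∫⁻ x in Iio (quantile ν id α), g x ∂ν +
        (ENNReal.ofReal α - ν (Iio (quantile ν id α))) * g (quantile ν id α) := by
  rw [← lintegral_map' hg.aemeasurable (aemeasurable_quantile_id hα),
    map_volume_restrict_Ioo_quantile_id hα, lintegral_add_measure, lintegral_smul_measure,
    lintegral_dirac' _ hg, smul_eq_mul]

end ProbabilityTheory

theorem integral_quantile_eq_tail_expectation_lt_general {Ω : Type*} [MeasurableSpace Ω]
    (μ : Measure Ω) [IsProbabilityMeasure μ] (X : Ω → ℝ) (hX : Measurable X)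
    (f : ℝ → ℝ) (hf : Measurable f)
    (α : ℝ) (hα : α ∈ Set.Ioo (0 : ℝ) 1) :
    (∫⁻ u in Set.Ioo (0 : ℝ) α, ENNReal.ofReal (f (quantile μ X u)))
      = (∫⁻ ω in {ω | X ω < quantile μ X α}, ENNReal.ofReal (f (X ω)) ∂μ)
        + ENNReal.ofReal (f (quantile μ X α))
          * (ENNReal.ofReal α - μ {ω | X ω < quantile μ X α}) := by
  have := Measure.isProbabilityMeasure_map (μ := μ) hX.aemeasurable
  simp only [← quantile_map μ hX]
  rw [setLIntegral_Ioo_comp_quantile_id hα hf.ennreal_ofReal,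
    setLIntegral_map measurableSet_Iio hf.ennreal_ofReal hX,
    Measure.map_apply hX measurableSet_Iio, mul_comm]
  rfl

/-- The strict-inequality variant:
`∫_0^α f(q_u(X)) du = E[f(X)·1{X < q_α(X)}] + f(q_α(X))·(α - P[X < q_α(X)])` for
non-negative Borel `f`, stated in `ℝ≥0∞` so that if either side is infinite,
so is the other. -/
theorem integral_quantile_eq_tail_expectation_lt {Ω : Type*} [MeasurableSpace Ω]
    (μ : Measure Ω) [IsProbabilityMeasure μ] (X : Ω → ℝ) (hX : Measurable X)
    (f : ℝ → ℝ) (hf : Measurable f) (hf0 : ∀ x, 0 ≤ f x)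
    (α : ℝ) (hα : α ∈ Set.Ioo (0 : ℝ) 1) :
    (∫⁻ u in Set.Ioo (0 : ℝ) α, ENNReal.ofReal (f (quantile μ X u)))
      = (∫⁻ ω in {ω | X ω < quantile μ X α}, ENNReal.ofReal (f (X ω)) ∂μ)
        + ENNReal.ofReal (f (quantile μ X α))
          * (ENNReal.ofReal α - μ {ω | X ω < quantile μ X α}) :=
  integral_quantile_eq_tail_expectation_lt_general μ X hX f hf α hα
end
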